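/- arXiv:1802.01419 — 6 statements merged into one kernel-verified Lean document; each statement's English description precedes it below -/
import Mathlib

section
/- Let O and P be partial orders on disjoint sets X and Y, respectively. Then the following four partially ordered sets are pairwise order-isomorphic: (i) Q(O,P) = {partial orders Q on X ∪ Y such that Q restricted to X equals O, Q restricted to Y equals P, and no element of Y is ≤_Q any element of X}, ordered by inclusion of relations; (ii) D(O,P) = {isotone maps f from (Y,P) to the lattice of downsets of O ordered by inclusion}, ordered pointwise; (iii) U(O,P) = {antitone maps g from (X,O) to the lattice of upsets of P ordered by inclusion}, ordered pointwise; (iv) R(O,P) = {relations R ⊆ X × Y such that x' ≤_O x and (x,y) ∈ R imply (x',y) ∈ R, and (x,y) ∈ R and y ≤_P y' imply (x,y') ∈ R}, ordered by inclusion. Moreover, each of these is isomorphic to the partially ordered set J(O,P) of all maps from the downset lattice of P to the downset lattice of O preserving arbitrary unions, ordered pointwise. -/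
/-- `Q(O,P)`: the partial orders on the disjoint union `X ⊕ Y` (relations viewed
as sets of pairs, ordered by inclusion) inducing the given orders on `X` and on
`Y`, and relating no element of `Y` below an element of `X`. -/
abbrev QOP (X Y : Type*) [PartialOrder X] [PartialOrder Y] :=
  {r : Set ((X ⊕ Y) × (X ⊕ Y)) //
    IsPartialOrder (X ⊕ Y) (fun a b => (a, b) ∈ r) ∧
    (∀ x x' : X, (Sum.inl x, Sum.inl x') ∈ r ↔ x ≤ x') ∧
    (∀ y y' : Y, (Sum.inr y, Sum.inr y') ∈ r ↔ y ≤ y') ∧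
    (∀ (y : Y) (x : X), (Sum.inr y, Sum.inl x) ∉ r)}

/-- `D(O,P)`: isotone maps from `Y` to the lattice of downsets of `X` (ordered by
inclusion), with the pointwise order. -/
abbrev DOP (X Y : Type*) [PartialOrder X] [PartialOrder Y] :=
  {f : Y → LowerSet X // Monotone f}

/-- The upsets of `Y`, ordered by inclusion. -/
abbrev UpSetsIncl (Y : Type*) [PartialOrder Y] := {U : Set Y // IsUpperSet U}

/-- `U(O,P)`: antitone maps from `X` to the lattice of upsets of `Y` (ordered by
inclusion), with the pointwise order. -/
abbrev UOP (X Y : Type*) [PartialOrder X] [PartialOrder Y] :=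
  {g : X → UpSetsIncl Y // Antitone g}

/-- `R(O,P)`: relations `R ⊆ X × Y` with `OR ∪ RP ⊆ R`, ordered by inclusion. -/
abbrev ROP (X Y : Type*) [PartialOrder X] [PartialOrder Y] :=
  {R : Set (X × Y) //
    (∀ (x x' : X) (y : Y), x' ≤ x → (x, y) ∈ R → (x', y) ∈ R) ∧
    (∀ (x : X) (y y' : Y), (x, y) ∈ R → y ≤ y' → (x, y') ∈ R)}

/-- `J(O,P)`: maps from the downset lattice of `Y` to that of `X` preserving
arbitrary unions (i.e. arbitrary suprema of lower sets), with the pointwise order. -/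
abbrev JOP (X Y : Type*) [PartialOrder X] [PartialOrder Y] :=
  {h : LowerSet Y → LowerSet X // ∀ S : Set (LowerSet Y), h (sSup S) = sSup (h '' S)}

section Aux
variable {X Y : Type*} [PartialOrder X] [PartialOrder Y]

def qrel (R : Set (X × Y)) : Set ((X ⊕ Y) × (X ⊕ Y)) :=
  {p | match p with
    | (Sum.inl x, Sum.inl x') => x ≤ x'
    | (Sum.inr y, Sum.inr y') => y ≤ y'
    | (Sum.inl x, Sum.inr y) => (x, y) ∈ R
    | (Sum.inr _, Sum.inl _) => False}

@[simp] lemma qrel_ll (R : Set (X × Y)) (x x' : X) :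
    ((Sum.inl x, Sum.inl x') ∈ qrel R) ↔ x ≤ x' := Iff.rfl
@[simp] lemma qrel_rr (R : Set (X × Y)) (y y' : Y) :
    ((Sum.inr y, Sum.inr y') ∈ qrel (X := X) R) ↔ y ≤ y' := Iff.rfl
@[simp] lemma qrel_lr (R : Set (X × Y)) (x : X) (y : Y) :
    ((Sum.inl x, Sum.inr y) ∈ qrel R) ↔ (x, y) ∈ R := Iff.rfl
@[simp] lemma qrel_rl (R : Set (X × Y)) (y : Y) (x : X) :
    ((Sum.inr y, Sum.inl x) ∈ qrel R) ↔ False := Iff.rfl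

def ropQop : ROP X Y ≃o QOP X Y where
  toFun R := ⟨qrel R.1, by
    refine ⟨?_, fun x x' => .rfl, fun y y' => .rfl, fun y x h => h⟩
    refine { refl := ?_, trans := ?_, antisymm := ?_ }
    · rintro (x | y) <;> simp
    · rintro (x | y) (x' | y') (x'' | y'') h h' <;>
        simp only [qrel_ll, qrel_rr, qrel_lr, qrel_rl, Set.mem_setOf_eq] at * <;>
        first
        | exact le_trans h h'
        | exact R.2.1 _ _ _ h h'
        | exact R.2.2 _ _ _ h h'
        | exact h.elim
        | exact h'.elim
    · rintro (x | y) (x' | y') h h' <;> simp_all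
      · exact le_antisymm h h'
      · exact le_antisymm h h'⟩
  invFun q := ⟨{p | (Sum.inl p.1, Sum.inr p.2) ∈ q.1}, by
    obtain ⟨r, hpo, hX, hY, hYX⟩ := q
    exact ⟨fun x x' y hle h => hpo.trans _ _ _ ((hX x' x).2 hle) h,
      fun x y y' h hle => hpo.trans _ _ _ h ((hY y y').2 hle)⟩⟩
  left_inv R := by
    ext ⟨x, y⟩; rfl
  right_inv q := by
    obtain ⟨r, hpo, hX, hY, hYX⟩ := q
    ext ⟨a | b, a' | b'⟩
    · simpa using (hX _ _).symm
    · rfl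
    · simpa using (hYX _ _)
    · simpa using (hY _ _).symm
  map_rel_iff' {R R'} := by
    constructor
    · intro h ⟨x, y⟩ hxy
      exact h (show (Sum.inl x, Sum.inr y) ∈ qrel R.1 from hxy)
    · intro h
      rintro ⟨a | b, a' | b'⟩ hp <;> simp_all
      exact h hp

def ropDop : ROP X Y ≃o DOP X Y where
  toFun R := ⟨fun y => ⟨{x | (x, y) ∈ R.1}, fun x x' hle hx => R.2.1 _ _ _ hle hx⟩,
    fun y y' hle x hx => R.2.2 _ _ _ hx hle⟩
  invFun f := ⟨{p | p.1 ∈ f.1 p.2},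
    ⟨fun x x' y hle h => (f.1 y).lower hle h, fun x y y' h hle => f.2 hle h⟩⟩
  left_inv R := rfl
  right_inv f := rfl
  map_rel_iff' {R R'} := by
    constructor
    · intro h ⟨x, y⟩ hxy
      exact h y hxy
    · intro h y x hx
      exact h hx

def ropUop : ROP X Y ≃o UOP X Y where
  toFun R := ⟨fun x => ⟨{y | (x, y) ∈ R.1}, fun y y' hle hy => R.2.2 _ _ _ hy hle⟩,
    fun x x' hle y hy => R.2.1 _ _ _ hle hy⟩
  invFun g := ⟨{p | p.2 ∈ (g.1 p.1).1},
    ⟨fun x x' y hle h => g.2 hle h, fun x y y' h hle => (g.1 x).2 hle h⟩⟩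
  left_inv R := rfl
  right_inv g := rfl
  map_rel_iff' {R R'} := by
    constructor
    · intro h ⟨x, y⟩ hxy
      exact h x hxy
    · intro h x y hy
      exact h hy

lemma lowerSet_eq_sSup_Iic (S : LowerSet Y) :
    S = sSup (LowerSet.Iic '' (S : Set Y)) := by
  apply SetLike.coe_injective
  rw [LowerSet.coe_sSup]
  ext a
  simp only [Set.mem_iUnion]
  constructor
  · intro ha
    exact ⟨LowerSet.Iic a, ⟨a, ha, rfl⟩, le_refl a⟩
  · rintro ⟨s, ⟨y, hy, rfl⟩, h⟩
    exact S.lower h hy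

def ropJop : ROP X Y ≃o JOP X Y where
  toFun R := ⟨fun S => ⟨{x | ∃ y ∈ S, (x, y) ∈ R.1},
      fun x x' hle ⟨y, hy, hxy⟩ => ⟨y, hy, R.2.1 _ _ _ hle hxy⟩⟩, by
    intro 𝒮
    apply SetLike.coe_injective
    rw [LowerSet.coe_sSup]
    ext a
    simp only [LowerSet.coe_sSup, Set.mem_iUnion, Set.mem_image]
    constructor
    · rintro ⟨y, hy, hay⟩
      rw [LowerSet.mem_sSup_iff] at hy
      obtain ⟨s, hs, hys⟩ := hy
      exact ⟨_, ⟨s, hs, rfl⟩, y, hys, hay⟩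
    · rintro ⟨_, ⟨s, hs, rfl⟩, y, hys, hay⟩
      exact ⟨y, LowerSet.mem_sSup_iff.2 ⟨s, hs, hys⟩, hay⟩⟩
  invFun h := ⟨{p | p.1 ∈ h.1 (LowerSet.Iic p.2)}, by
    constructor
    · intro x x' y hle hx
      exact (h.1 (LowerSet.Iic y)).lower hle hx
    · intro x y y' hx hle
      have hm : h.1 (LowerSet.Iic y) ≤ h.1 (LowerSet.Iic y') := by
        have : (LowerSet.Iic y) ⊔ (LowerSet.Iic y') = LowerSet.Iic y' := by
          apply sup_eq_right.2
          intro a ha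
          exact le_trans ha hle
        calc h.1 (LowerSet.Iic y) ≤ h.1 (LowerSet.Iic y) ⊔ h.1 (LowerSet.Iic y') := le_sup_left
          _ = h.1 (LowerSet.Iic y ⊔ LowerSet.Iic y') := by
              have := h.2 {LowerSet.Iic y, LowerSet.Iic y'}
              simp [sSup_pair, Set.image_pair] at this
              exact this.symm
          _ = h.1 (LowerSet.Iic y') := by rw [this]
      exact hm hx⟩
  left_inv R := by
    apply Subtype.ext
    ext ⟨x, y⟩
    simp only [Set.mem_setOf_eq]
    constructor
    · rintro ⟨y', hy', hxy⟩
      exact R.2.2 _ _ _ hxy hy'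
    · intro hxy
      exact ⟨y, le_refl y, hxy⟩
  right_inv h := by
    apply Subtype.ext
    funext S
    conv_rhs => rw [lowerSet_eq_sSup_Iic S, h.2]
    apply SetLike.coe_injective
    rw [LowerSet.coe_sSup]
    ext a
    simp only [Set.mem_setOf_eq, Set.mem_iUnion, Set.mem_image]
    constructor
    · rintro ⟨y, hy, ha⟩
      exact ⟨h.1 (LowerSet.Iic y), ⟨LowerSet.Iic y, ⟨y, hy, rfl⟩, rfl⟩, ha⟩
    · rintro ⟨s, ⟨t, ⟨y, hy, rfl⟩, rfl⟩, ha⟩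
      exact ⟨y, hy, ha⟩
  map_rel_iff' {R R'} := by
    constructor
    · intro h ⟨x, y⟩ hxy
      have := h (LowerSet.Iic y) ⟨y, le_refl y, hxy⟩
      obtain ⟨y', hy', h'⟩ := this
      exact R'.2.2 _ _ _ h' hy' 
    · intro h S x ⟨y, hy, hxy⟩
      exact ⟨y, hy, h hxy⟩


end Aux

/-- Theorem 2.1: the five posets `Q(O,P)`, `D(O,P)`, `U(O,P)`, `R(O,P)` and
`J(O,P)` are pairwise order-isomorphic. -/
theorem stmt_0 (X Y : Type*) [PartialOrder X] [PartialOrder Y] :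
    Nonempty (QOP X Y ≃o DOP X Y) ∧ Nonempty (QOP X Y ≃o UOP X Y) ∧
    Nonempty (QOP X Y ≃o ROP X Y) ∧ Nonempty (QOP X Y ≃o JOP X Y) :=
  ⟨⟨ropQop.symm.trans ropDop⟩, ⟨ropQop.symm.trans ropUop⟩, ⟨ropQop.symm⟩,
    ⟨ropQop.symm.trans ropJop⟩⟩
end

section
/- For any subset A of a finite poset P, the number d(P) of downsets of P satisfies d(P) ≤ Σ_{B ⊆ A} d(P − ((A∖B)P ∪ PB)), where the sum ranges over all subsets B of A. Moreover, equality holds whenever A is an antichain of P. -/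
open scoped Classical

variable {α : Type*} [DecidableEq α]

/-- `q` is a partial order relation with ground set `S`: it is a set of pairs
contained in `S × S`, reflexive on `S`, transitive and antisymmetric. -/
def IsPOon (S : Finset α) (q : Finset (α × α)) : Prop :=
  q ⊆ S ×ˢ S ∧ (∀ x ∈ S, (x, x) ∈ q) ∧
  (∀ x y z : α, (x, y) ∈ q → (y, z) ∈ q → (x, z) ∈ q) ∧
  (∀ x y : α, (x, y) ∈ q → (y, x) ∈ q → x = y)

/-- The relation induced on a subset `A` of the ground set. -/
def restrictRel (q : Finset (α × α)) (A : Finset α) : Finset (α × α) :=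
  q.filter fun r => r.1 ∈ A ∧ r.2 ∈ A

/-- The downsets of the poset `(S, q)`. -/
noncomputable def downsets (S : Finset α) (q : Finset (α × α)) : Finset (Finset α) :=
  S.powerset.filter fun D => ∀ y ∈ D, ∀ x : α, (x, y) ∈ q → x ∈ D

/-- `d(P)`, the number of downsets of the poset `(S, q)`. -/
noncomputable def dnum (S : Finset α) (q : Finset (α × α)) : ℕ :=
  (downsets S q).card

/-- The upsets of the poset `(S, q)`. -/
noncomputable def upsets (S : Finset α) (q : Finset (α × α)) : Finset (Finset α) :=
  S.powerset.filter fun U => ∀ x ∈ U, ∀ y : α, (x, y) ∈ q → y ∈ U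

/-- Down-closure `QA = {x : x ≤_Q a for some a ∈ A}`. -/
def dcl (q : Finset (α × α)) (A : Finset α) : Finset α :=
  (q.filter fun r => r.2 ∈ A).image Prod.fst

/-- Up-closure `AQ = {y : a ≤_Q y for some a ∈ A}`. -/
def ucl (q : Finset (α × α)) (A : Finset α) : Finset α :=
  (q.filter fun r => r.1 ∈ A).image Prod.snd

/-- The set of minimal elements of the poset `(S, q)`. -/
noncomputable def minset (S : Finset α) (q : Finset (α × α)) : Finset α :=
  S.filter fun x => ∀ y : α, (y, x) ∈ q → y = x

/-- `E(M, P)`: the partial orders on `M ∪ K` inducing `p` on `K` whose set of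
minimal elements is exactly `M`. -/
noncomputable def extPOs (M K : Finset α) (p : Finset (α × α)) :
    Finset (Finset (α × α)) :=
  ((M ∪ K) ×ˢ (M ∪ K)).powerset.filter fun q =>
    IsPOon (M ∪ K) q ∧ restrictRel q K = p ∧ minset (M ∪ K) q = M

/-- `A` is an antichain of the poset `(S, q)`. -/
def isAntichain (S : Finset α) (q : Finset (α × α)) (A : Finset α) : Prop :=
  A ⊆ S ∧ ∀ x ∈ A, ∀ y ∈ A, (x, y) ∈ q → x = y

/-- The posets `(S, q)` and `(T, r)` are order-isomorphic. -/
def POIso {β : Type*} (S : Finset α) (q : Finset (α × α))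
    (T : Finset β) (r : Finset (β × β)) : Prop :=
  ∃ f : α → β, Set.BijOn f ↑S ↑T ∧ ∀ x ∈ S, ∀ y ∈ S, ((x, y) ∈ q ↔ (f x, f y) ∈ r)

/-- `C` is a chain of the poset `(S, q)`. -/
def isChainOn (S : Finset α) (q : Finset (α × α)) (C : Finset α) : Prop :=
  C ⊆ S ∧ ∀ x ∈ C, ∀ y ∈ C, (x, y) ∈ q ∨ (y, x) ∈ q

/-- The height of the poset `(S, q)`: the maximal size of a chain. -/
noncomputable def heightP (S : Finset α) (q : Finset (α × α)) : ℕ :=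
  (S.powerset.filter (isChainOn S q)).sup Finset.card

lemma mem_dcl {q : Finset (α × α)} {B : Finset α} {x : α} :
    x ∈ dcl q B ↔ ∃ b ∈ B, (x, b) ∈ q := by
  simp only [dcl, Finset.mem_image, Finset.mem_filter, Prod.exists]
  constructor
  · rintro ⟨a, b, ⟨hq, hb⟩, rfl⟩; exact ⟨b, hb, hq⟩
  · rintro ⟨b, hb, hqq⟩; exact ⟨x, b, ⟨hqq, hb⟩, rfl⟩

lemma mem_ucl {q : Finset (α × α)} {B : Finset α} {y : α} :
    y ∈ ucl q B ↔ ∃ a ∈ B, (a, y) ∈ q := by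
  simp only [ucl, Finset.mem_image, Finset.mem_filter, Prod.exists]
  constructor
  · rintro ⟨a, b, ⟨hq, hb⟩, rfl⟩; exact ⟨a, hb, hq⟩
  · rintro ⟨a, ha, hqq⟩; exact ⟨a, y, ⟨hqq, ha⟩, rfl⟩

lemma mem_downsets {S : Finset α} {q : Finset (α × α)} {D : Finset α} :
    D ∈ downsets S q ↔ D ⊆ S ∧ ∀ y ∈ D, ∀ x : α, (x, y) ∈ q → x ∈ D := by
  simp [downsets, Finset.mem_filter, Finset.mem_powerset]

lemma mem_restrictRel {q : Finset (α × α)} {T : Finset α} {x y : α} :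
    (x, y) ∈ restrictRel q T ↔ (x, y) ∈ q ∧ x ∈ T ∧ y ∈ T := by
  simp [restrictRel, Finset.mem_filter, and_assoc]

section Key

variable {S : Finset α} {q : Finset (α × α)} {A B : Finset α}

/-- In the fiber, `D` decomposes as `(D ∩ T) ∪ dcl q B` and `D ∩ T` is a downset of `T`. -/
lemma fiber_decomp (hq : IsPOon S q) (hB : B ⊆ A)
    {D : Finset α} (hD : D ∈ (downsets S q).filter fun D => A ∩ D = B) :
    (D ∩ (S \ (ucl q (A \ B) ∪ dcl q B))
        ∈ downsets (S \ (ucl q (A \ B) ∪ dcl q B))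
          (restrictRel q (S \ (ucl q (A \ B) ∪ dcl q B)))) ∧
      D = D ∩ (S \ (ucl q (A \ B) ∪ dcl q B)) ∪ dcl q B := by
  set T := S \ (ucl q (A \ B) ∪ dcl q B) with hT
  rw [Finset.mem_filter, mem_downsets] at hD
  obtain ⟨⟨hDS, hDdown⟩, hAD⟩ := hD
  have hdclD : dcl q B ⊆ D := by
    intro x hx
    obtain ⟨b, hb, hxb⟩ := mem_dcl.mp hx
    have hbD : b ∈ D := (Finset.mem_inter.mp (hAD ▸ hb)).2
    exact hDdown b hbD x hxb
  have huclD : ∀ x ∈ D, x ∉ ucl q (A \ B) := by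
    intro x hx hmem
    obtain ⟨a, ha, hax⟩ := mem_ucl.mp hmem
    rw [Finset.mem_sdiff] at ha
    have : a ∈ D := hDdown x hx a hax
    exact ha.2 (hAD ▸ Finset.mem_inter.mpr ⟨ha.1, this⟩)
  constructor
  · rw [mem_downsets]
    refine ⟨Finset.inter_subset_right, ?_⟩
    intro y hy x hxy
    rw [mem_restrictRel] at hxy
    exact Finset.mem_inter.mpr ⟨hDdown y (Finset.mem_inter.mp hy).1 x hxy.1, hxy.2.1⟩
  · apply Finset.Subset.antisymm
    · intro x hx
      by_cases hxd : x ∈ dcl q B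
      · exact Finset.mem_union_right _ hxd
      · refine Finset.mem_union_left _ (Finset.mem_inter.mpr ⟨hx, ?_⟩)
        rw [hT, Finset.mem_sdiff, Finset.mem_union]
        exact ⟨hDS hx, fun h => h.elim (huclD x hx) hxd⟩
    · exact Finset.union_subset Finset.inter_subset_left hdclD

/-- For antichains, `E ∪ dcl q B` is in the fiber, for any downset `E` of `T`. -/
lemma fiber_inv (hq : IsPOon S q) (hA : A ⊆ S) (hB : B ⊆ A)
    (hanti : isAntichain S q A)
    {E : Finset α}
    (hE : E ∈ downsets (S \ (ucl q (A \ B) ∪ dcl q B))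
            (restrictRel q (S \ (ucl q (A \ B) ∪ dcl q B)))) :
    (E ∪ dcl q B) ∈ (downsets S q).filter (fun D => A ∩ D = B) ∧
      (E ∪ dcl q B) ∩ (S \ (ucl q (A \ B) ∪ dcl q B)) = E := by
  set T := S \ (ucl q (A \ B) ∪ dcl q B) with hT
  obtain ⟨hqS, hrefl, htrans, hasym⟩ := hq
  rw [mem_downsets] at hE
  obtain ⟨hET, hEdown⟩ := hE
  have hdclS : dcl q B ⊆ S := by
    intro x hx
    obtain ⟨b, hb, hxb⟩ := mem_dcl.mp hx
    exact (Finset.mem_product.mp (hqS hxb)).1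
  have hTS : T ⊆ S := Finset.sdiff_subset
  have hdclT : ∀ x ∈ dcl q B, x ∉ T := by
    intro x hx hxT
    rw [hT, Finset.mem_sdiff, Finset.mem_union] at hxT
    exact hxT.2 (Or.inr hx)
  have hDdown : ∀ y ∈ E ∪ dcl q B, ∀ x : α, (x, y) ∈ q → x ∈ E ∪ dcl q B := by
    intro y hy x hxy
    rcases Finset.mem_union.mp hy with hyE | hyd
    · by_cases hxd : x ∈ dcl q B
      · exact Finset.mem_union_right _ hxd
      · have hyT : y ∈ T := hET hyE
        have hxS : x ∈ S := (Finset.mem_product.mp (hqS hxy)).1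
        have hxT : x ∈ T := by
          rw [hT, Finset.mem_sdiff, Finset.mem_union]
          refine ⟨hxS, fun h => ?_⟩
          rcases h with hxu | hxd'
          · obtain ⟨a, ha, hax⟩ := mem_ucl.mp hxu
            have : y ∈ ucl q (A \ B) := mem_ucl.mpr ⟨a, ha, htrans a x y hax hxy⟩
            rw [hT, Finset.mem_sdiff, Finset.mem_union] at hyT
            exact hyT.2 (Or.inl this)
          · exact hxd hxd'
        exact Finset.mem_union_left _
          (hEdown y hyE x (mem_restrictRel.mpr ⟨hxy, hxT, hyT⟩))
    · obtain ⟨b, hb, hyb⟩ := mem_dcl.mp hyd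
      exact Finset.mem_union_right _ (mem_dcl.mpr ⟨b, hb, htrans x y b hxy hyb⟩)
  have hBd : B ⊆ dcl q B := fun b hb =>
    mem_dcl.mpr ⟨b, hb, hrefl b (hA (hB hb))⟩
  have hADB : A ∩ (E ∪ dcl q B) = B := by
    apply Finset.Subset.antisymm
    · intro a ha
      rw [Finset.mem_inter, Finset.mem_union] at ha
      obtain ⟨haA, haD⟩ := ha
      rcases haD with haE | had
      · by_contra haB
        have : a ∈ ucl q (A \ B) :=
          mem_ucl.mpr ⟨a, Finset.mem_sdiff.mpr ⟨haA, haB⟩, hrefl a (hA haA)⟩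
        have haT := hET haE
        rw [hT, Finset.mem_sdiff, Finset.mem_union] at haT
        exact haT.2 (Or.inl this)
      · obtain ⟨b, hb, hab⟩ := mem_dcl.mp had
        have : a = b := hanti.2 a haA b (hB hb) hab
        exact this ▸ hb
    · intro b hb
      exact Finset.mem_inter.mpr ⟨hB hb, Finset.mem_union_right _ (hBd hb)⟩
  refine ⟨Finset.mem_filter.mpr ⟨mem_downsets.mpr ⟨?_, hDdown⟩, hADB⟩, ?_⟩
  · exact Finset.union_subset (hET.trans hTS) hdclS
  · rw [Finset.union_inter_distrib_right,
      Finset.inter_eq_left.mpr hET]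
    have : dcl q B ∩ T = ∅ := by
      rw [Finset.eq_empty_iff_forall_notMem]
      intro x hx
      rw [Finset.mem_inter] at hx
      exact hdclT x hx.1 hx.2
    rw [this, Finset.union_empty]

lemma fiber_card_le (hq : IsPOon S q) (hB : B ⊆ A) :
    ((downsets S q).filter fun D => A ∩ D = B).card ≤
      dnum (S \ (ucl q (A \ B) ∪ dcl q B))
        (restrictRel q (S \ (ucl q (A \ B) ∪ dcl q B))) := by
  apply Finset.card_le_card_of_injOn
    (fun D => D ∩ (S \ (ucl q (A \ B) ∪ dcl q B)))
  · intro D hD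
    exact (fiber_decomp hq hB hD).1
  · intro D1 h1 D2 h2 heq
    have e1 := (fiber_decomp hq hB h1).2
    have e2 := (fiber_decomp hq hB h2).2
    simp only at heq
    rw [e1, e2, heq]

lemma fiber_card_eq (hq : IsPOon S q) (hA : A ⊆ S) (hB : B ⊆ A)
    (hanti : isAntichain S q A) :
    ((downsets S q).filter fun D => A ∩ D = B).card =
      dnum (S \ (ucl q (A \ B) ∪ dcl q B))
        (restrictRel q (S \ (ucl q (A \ B) ∪ dcl q B))) := by
  apply Finset.card_bij'
    (fun D _ => D ∩ (S \ (ucl q (A \ B) ∪ dcl q B)))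
    (fun E _ => E ∪ dcl q B)
  · intro D hD
    exact (fiber_decomp hq hB hD).1
  · intro E hE
    exact (fiber_inv hq hA hB hanti hE).1
  · intro D hD
    exact ((fiber_decomp hq hB hD).2).symm
  · intro E hE
    exact (fiber_inv hq hA hB hanti hE).2

end Key

/-- Theorem 3.1: for any subset `A` of a finite poset `P`,
`d(P) ≤ Σ_{B ⊆ A} d(P − ((A∖B)P ∪ PB))`, with equality when `A` is an antichain. -/
theorem stmt_1 (S : Finset α) (q : Finset (α × α)) (hq : IsPOon S q)
    (A : Finset α) (hA : A ⊆ S) :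
    dnum S q ≤
      (∑ B ∈ A.powerset,
        dnum (S \ (ucl q (A \ B) ∪ dcl q B))
          (restrictRel q (S \ (ucl q (A \ B) ∪ dcl q B)))) ∧
    (isAntichain S q A →
      dnum S q =
        ∑ B ∈ A.powerset,
          dnum (S \ (ucl q (A \ B) ∪ dcl q B))
            (restrictRel q (S \ (ucl q (A \ B) ∪ dcl q B)))) := by
  have hsplit : dnum S q =
      ∑ B ∈ A.powerset, ((downsets S q).filter fun D => A ∩ D = B).card := by
    apply Finset.card_eq_sum_card_fiberwise
    intro D _
    exact Finset.mem_powerset.mpr Finset.inter_subset_left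
  constructor
  · rw [hsplit]
    apply Finset.sum_le_sum
    intro B hB
    exact fiber_card_le hq (Finset.mem_powerset.mp hB)
  · intro hanti
    rw [hsplit]
    apply Finset.sum_congr rfl
    intro B hB
    exact fiber_card_eq hq hA (Finset.mem_powerset.mp hB) hanti
end

section
/- For any antichain A of a finite poset P, the number of downsets of P satisfies d(P) = Σ_{B} 2^{#(A ∖ (PB ∪ BP))}, where the sum ranges over all antichains B of the induced poset P − A, and PB, BP denote the down-closure and up-closure of B taken in P. -/
open scoped Classical

variable {α : Type*} [DecidableEq α]

noncomputable def maxsetq (q : Finset (α × α)) (D : Finset α) : Finset α :=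
  D.filter fun x => ∀ y ∈ D, (x, y) ∈ q → y = x

lemma mem_dcl_iff {q : Finset (α × α)} {X : Finset α} {x : α} :
    x ∈ dcl q X ↔ ∃ a ∈ X, (x, a) ∈ q := by
  simp only [dcl, Finset.mem_image, Finset.mem_filter, Prod.exists]
  constructor
  · rintro ⟨u, v, ⟨hq, hv⟩, rfl⟩; exact ⟨v, hv, hq⟩
  · rintro ⟨a, ha, hq⟩; exact ⟨x, a, ⟨hq, ha⟩, rfl⟩

lemma mem_ucl_iff {q : Finset (α × α)} {X : Finset α} {x : α} :
    x ∈ ucl q X ↔ ∃ a ∈ X, (a, x) ∈ q := by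
  simp only [ucl, Finset.mem_image, Finset.mem_filter, Prod.exists]
  constructor
  · rintro ⟨u, v, ⟨hq, hv⟩, rfl⟩; exact ⟨u, hv, hq⟩
  · rintro ⟨a, ha, hq⟩; exact ⟨a, x, ⟨hq, ha⟩, rfl⟩

lemma exists_maximal' (q : Finset (α × α))
    (htrans : ∀ x y z : α, (x, y) ∈ q → (y, z) ∈ q → (x, z) ∈ q)
    (hanti : ∀ x y : α, (x, y) ∈ q → (y, x) ∈ q → x = y)
    (D : Finset α) (hrefl : ∀ x ∈ D, (x, x) ∈ q) :
    ∀ x ∈ D, ∃ m ∈ D, (x, m) ∈ q ∧ ∀ y ∈ D, (m, y) ∈ q → y = m := by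
  intro x hx
  generalize hn : (D.filter fun z => (x, z) ∈ q).card = n
  induction n using Nat.strong_induction_on generalizing x with
  | _ n ih =>
    by_cases h : ∀ y ∈ D, (x, y) ∈ q → y = x
    · exact ⟨x, hx, hrefl x hx, h⟩
    · push_neg at h
      obtain ⟨y, hy, hxy, hne⟩ := h
      have hlt : (D.filter fun z => (y, z) ∈ q).card < n := by
        rw [← hn]
        apply Finset.card_lt_card
        constructor
        · intro z hz
          rw [Finset.mem_filter] at hz ⊢
          exact ⟨hz.1, htrans x y z hxy hz.2⟩
        · intro hsub
          have hxmem : x ∈ D.filter fun z => (x, z) ∈ q :=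
            Finset.mem_filter.mpr ⟨hx, hrefl x hx⟩
          have := hsub hxmem
          rw [Finset.mem_filter] at this
          exact hne (hanti x y hxy this.2).symm
      obtain ⟨m, hm, hym, hmax⟩ := ih _ hlt y hy rfl
      exact ⟨m, hm, htrans x y m hxy hym, hmax⟩

theorem stmt_2' (S : Finset α) (q : Finset (α × α)) (hq : IsPOon S q)
    (A : Finset α) (hA : isAntichain S q A) :
    dnum S q =
      ∑ B ∈ (S \ A).powerset.filter
          (fun B => isAntichain (S \ A) (restrictRel q (S \ A)) B),
        2 ^ (A \ (dcl q B ∪ ucl q B)).card := by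
  classical
  obtain ⟨hqS, hrefl, htrans, hanti⟩ := hq
  obtain ⟨hAS, hAac⟩ := hA
  have hq1 : ∀ {x y : α}, (x, y) ∈ q → x ∈ S := fun h => (Finset.mem_product.mp (hqS h)).1
  have hq2 : ∀ {x y : α}, (x, y) ∈ q → y ∈ S := fun h => (Finset.mem_product.mp (hqS h)).2
  have mem_down : ∀ {D : Finset α}, D ∈ downsets S q ↔
      D ⊆ S ∧ ∀ y ∈ D, ∀ x : α, (x, y) ∈ q → x ∈ D := by
    intro D; simp [downsets, Finset.mem_filter, Finset.mem_powerset]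
  have key : ∀ D ∈ downsets S q,
      maxsetq q D \ A ∈ (S \ A).powerset.filter
        (fun B => isAntichain (S \ A) (restrictRel q (S \ A)) B) := by
    intro D hD
    obtain ⟨hDS, hDdown⟩ := mem_down.mp hD
    have hsub : maxsetq q D \ A ⊆ S \ A := by
      intro x hx
      rw [Finset.mem_sdiff] at hx ⊢
      exact ⟨hDS (Finset.mem_filter.mp hx.1).1, hx.2⟩
    refine Finset.mem_filter.mpr ⟨Finset.mem_powerset.mpr hsub, hsub, ?_⟩
    intro x hx y hy hxy
    rw [restrictRel, Finset.mem_filter] at hxy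
    have hxmax := (Finset.mem_filter.mp (Finset.mem_sdiff.mp hx).1).2
    have hyD := (Finset.mem_filter.mp (Finset.mem_sdiff.mp hy).1).1
    exact (hxmax y hyD hxy.1).symm
  rw [dnum, Finset.card_eq_sum_card_fiberwise key]
  refine Finset.sum_congr rfl fun B hB => ?_
  rw [Finset.mem_filter, Finset.mem_powerset] at hB
  obtain ⟨hBSA, -, hBac'⟩ := hB
  have hBS : B ⊆ S := fun x hx => (Finset.mem_sdiff.mp (hBSA hx)).1
  have hBA : ∀ x ∈ B, x ∉ A := fun x hx => (Finset.mem_sdiff.mp (hBSA hx)).2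
  have hBac : ∀ x ∈ B, ∀ y ∈ B, (x, y) ∈ q → x = y := by
    intro x hx y hy hxy
    exact hBac' x hx y hy (Finset.mem_filter.mpr ⟨hxy, hBSA hx, hBSA hy⟩)
  rw [← Finset.card_powerset]
  apply Finset.card_bij' (fun D _ => (D ∩ A) \ dcl q B)
    (fun T _ => dcl q B ∪ dcl q T)
  -- hi
  · intro D hD
    rw [Finset.mem_filter] at hD
    obtain ⟨hDdown, hfib⟩ := hD
    obtain ⟨hDS, hDd⟩ := mem_down.mp hDdown
    rw [Finset.mem_powerset]
    intro a ha
    rw [Finset.mem_sdiff, Finset.mem_inter] at ha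
    obtain ⟨⟨haD, haA⟩, hadcl⟩ := ha
    rw [Finset.mem_sdiff, Finset.mem_union]
    refine ⟨haA, ?_⟩
    rintro (h | h)
    · exact hadcl h
    · obtain ⟨b, hb, hba⟩ := mem_ucl_iff.mp h
      rw [← hfib, Finset.mem_sdiff, maxsetq, Finset.mem_filter] at hb
      exact hb.2 (hb.1.2 a haD hba ▸ haA)
  -- hj
  · intro T hT
    rw [Finset.mem_powerset] at hT
    have hTA : ∀ t ∈ T, t ∈ A := fun t ht => (Finset.mem_sdiff.mp (hT ht)).1
    have hTd : ∀ t ∈ T, t ∉ dcl q B := fun t ht h =>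
      (Finset.mem_sdiff.mp (hT ht)).2 (Finset.mem_union_left _ h)
    have hTu : ∀ t ∈ T, t ∉ ucl q B := fun t ht h =>
      (Finset.mem_sdiff.mp (hT ht)).2 (Finset.mem_union_right _ h)
    set D := dcl q B ∪ dcl q T with hDdef
    have hmemD : ∀ {x : α}, x ∈ D ↔ (∃ b ∈ B, (x, b) ∈ q) ∨ ∃ t ∈ T, (x, t) ∈ q := by
      intro x
      rw [hDdef, Finset.mem_union, mem_dcl_iff, mem_dcl_iff]
    have hBD : ∀ b ∈ B, b ∈ D := fun b hb =>
      hmemD.mpr (Or.inl ⟨b, hb, hrefl b (hBS hb)⟩)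
    have hTD : ∀ t ∈ T, t ∈ D := fun t ht =>
      hmemD.mpr (Or.inr ⟨t, ht, hrefl t (hAS (hTA t ht))⟩)
    have hDdown : D ∈ downsets S q := by
      rw [mem_down]
      constructor
      · intro x hx
        rcases hmemD.mp hx with ⟨b, _, h⟩ | ⟨t, _, h⟩ <;> exact hq1 h
      · intro y hy x hxy
        rcases hmemD.mp hy with ⟨b, hb, h⟩ | ⟨t, ht, h⟩
        · exact hmemD.mpr (Or.inl ⟨b, hb, htrans x y b hxy h⟩)
        · exact hmemD.mpr (Or.inr ⟨t, ht, htrans x y t hxy h⟩)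
    rw [Finset.mem_filter]
    refine ⟨hDdown, ?_⟩
    ext m
    rw [Finset.mem_sdiff, maxsetq, Finset.mem_filter]
    constructor
    · rintro ⟨⟨hmD, hmax⟩, hmA⟩
      rcases hmemD.mp hmD with ⟨b, hb, h⟩ | ⟨t, ht, h⟩
      · exact hmax b (hBD b hb) h ▸ hb
      · exact absurd (hmax t (hTD t ht) h ▸ hTA t ht) hmA
    · intro hb
      refine ⟨⟨hBD m hb, ?_⟩, hBA m hb⟩
      intro y hyD hmy
      rcases hmemD.mp hyD with ⟨b', hb', h⟩ | ⟨t, ht, h⟩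
      · have : m = b' := hBac m hb b' hb' (htrans m y b' hmy h)
        exact hanti y m (this ▸ h) hmy
      · exact absurd (mem_ucl_iff.mpr ⟨m, hb, htrans m y t hmy h⟩) (hTu t ht)
  -- left_inv
  · intro D hD
    rw [Finset.mem_filter] at hD
    obtain ⟨hDdown, hfib⟩ := hD
    obtain ⟨hDS, hDd⟩ := mem_down.mp hDdown
    have hBmax : ∀ b ∈ B, b ∈ D ∧ ∀ y ∈ D, (b, y) ∈ q → y = b := by
      intro b hb
      rw [← hfib, Finset.mem_sdiff, maxsetq, Finset.mem_filter] at hb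
      exact hb.1
    ext x
    rw [Finset.mem_union, mem_dcl_iff, mem_dcl_iff]
    constructor
    · rintro (⟨b, hb, h⟩ | ⟨t, ht, h⟩)
      · exact hDd b (hBmax b hb).1 x h
      · rw [Finset.mem_sdiff, Finset.mem_inter] at ht
        exact hDd t ht.1.1 x h
    · intro hx
      obtain ⟨m, hmD, hxm, hmax⟩ := exists_maximal' q htrans hanti D
        (fun z hz => hrefl z (hDS hz)) x hx
      by_cases hmA : m ∈ A
      · refine Or.inr ⟨m, ?_, hxm⟩
        rw [Finset.mem_sdiff, Finset.mem_inter]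
        refine ⟨⟨hmD, hmA⟩, ?_⟩
        intro hmdcl
        obtain ⟨b, hb, hmb⟩ := mem_dcl_iff.mp hmdcl
        exact hBA b hb (hmax b (hBmax b hb).1 hmb ▸ hmA)
      · refine Or.inl ⟨m, ?_, hxm⟩
        rw [← hfib, Finset.mem_sdiff, maxsetq, Finset.mem_filter]
        exact ⟨⟨hmD, hmax⟩, hmA⟩
  -- right_inv
  · intro T hT
    rw [Finset.mem_powerset] at hT
    ext a
    rw [Finset.mem_sdiff, Finset.mem_inter, Finset.mem_union]
    constructor
    · rintro ⟨⟨h | h, haA⟩, hdcl⟩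
      · exact absurd h hdcl
      · obtain ⟨t, ht, hat⟩ := mem_dcl_iff.mp h
        exact hAac a haA t (Finset.mem_sdiff.mp (hT ht)).1 hat ▸ ht
    · intro ha
      have haA := (Finset.mem_sdiff.mp (hT ha)).1
      refine ⟨⟨Or.inr (mem_dcl_iff.mpr ⟨a, ha, hrefl a (hAS haA)⟩), haA⟩, ?_⟩
      intro h
      exact (Finset.mem_sdiff.mp (hT ha)).2 (Finset.mem_union_left _ h)

/-- Theorem 3.2: for any antichain `A` of a finite poset `P`,
`d(P) = Σ_{B antichain of P − A} 2^{#(A ∖ (PB ∪ BP))}`. -/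
theorem stmt_2 (S : Finset α) (q : Finset (α × α)) (hq : IsPOon S q)
    (A : Finset α) (hA : isAntichain S q A) :
    dnum S q =
      ∑ B ∈ (S \ A).powerset.filter
          (fun B => isAntichain (S \ A) (restrictRel q (S \ A)) B),
        2 ^ (A \ (dcl q B ∪ ucl q B)).card := by
  exact stmt_2' S q hq A hA
end

section
/- Let M and K be disjoint finite sets with #M = m and let P be a partial order on K. Then the following five sets have the same cardinality e(m,P): (i) E(M,P), the set of all partial orders Q on M ∪ K inducing P on K whose set of minimal elements is exactly M; (ii) F(M,P), the set of all maps f from K to the nonempty subsets of M such that x ≤_P y implies f(x) ⊆ f(y); (iii) G(M,P), the set of all maps g from M to the upsets of P with ⋃_{a ∈ M} g(a) = K; (iv) H(M,P), the set of all maps h from the downsets of P to the subsets of M preserving arbitrary unions and satisfying h(D) = ∅ only for D = ∅; (v) I(M,P), the set of all relations R ⊆ M × K such that (a,x) ∈ R and x ≤_P y imply (a,y) ∈ R, and every element of K is R-related to some element of M. -/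
open scoped Classical

variable {α : Type*} [DecidableEq α]

lemma exists_min_below (S : Finset α) (q : Finset (α × α)) (hq : IsPOon S q)
    (x : α) (hx : x ∈ S) : ∃ a ∈ minset S q, (a, x) ∈ q := by
  obtain ⟨hsub, hrefl, htrans, hanti⟩ := hq
  set L := S.filter (fun y => (y, x) ∈ q) with hLdef
  have hxL : x ∈ L := by simp [hLdef, hrefl x hx, hx]
  obtain ⟨y, hyL, hmin⟩ := L.exists_min_image
    (fun y => (L.filter (fun z => (z, y) ∈ q)).card) ⟨x, hxL⟩
  have hyS : y ∈ S := (Finset.mem_filter.1 hyL).1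
  have hyx : (y, x) ∈ q := (Finset.mem_filter.1 hyL).2
  refine ⟨y, ?_, hyx⟩
  rw [minset, Finset.mem_filter]
  refine ⟨hyS, fun z hzy => ?_⟩
  by_contra hne
  have hzS : z ∈ S := by
    have := hsub hzy; rw [Finset.mem_product] at this; exact this.1
  have hzL : z ∈ L := by
    rw [hLdef, Finset.mem_filter]; exact ⟨hzS, htrans _ _ _ hzy hyx⟩
  have hss : L.filter (fun w => (w, z) ∈ q) ⊂ L.filter (fun w => (w, y) ∈ q) := by
    constructor
    · intro w hw
      rw [Finset.mem_filter] at hw ⊢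
      exact ⟨hw.1, htrans _ _ _ hw.2 hzy⟩
    · intro hsub2
      have hyin : y ∈ L.filter (fun w => (w, y) ∈ q) := by
        rw [Finset.mem_filter]; exact ⟨hyL, hrefl y hyS⟩
      have := hsub2 hyin
      rw [Finset.mem_filter] at this
      exact hne (hanti _ _ hzy this.2)
  exact absurd (hmin z hzL) (by simpa using Finset.card_lt_card hss)

/-- The finset `I(M,P)` of relations. -/
noncomputable def Irel (M K : Finset α) (p : Finset (α × α)) :
    Finset (Finset (α × α)) :=
  (M ×ˢ K).powerset.filter fun R =>
    (∀ a x y : α, (a, x) ∈ R → (x, y) ∈ p → (a, y) ∈ R) ∧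
    ∀ x ∈ K, ∃ a ∈ M, (a, x) ∈ R

lemma mem_Irel {M K : Finset α} {p : Finset (α × α)} {R : Finset (α × α)} :
    R ∈ Irel M K p ↔ R ⊆ M ×ˢ K ∧
      (∀ a x y : α, (a, x) ∈ R → (x, y) ∈ p → (a, y) ∈ R) ∧
      ∀ x ∈ K, ∃ a ∈ M, (a, x) ∈ R := by
  simp [Irel, Finset.mem_filter, Finset.mem_powerset, and_assoc]

noncomputable def toE (M : Finset α) (p : Finset (α × α)) (R : Finset (α × α)) :
    Finset (α × α) :=
  p ∪ M.image (fun a => (a, a)) ∪ R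

lemma mem_toE {M : Finset α} {p R : Finset (α × α)} {x y : α} :
    (x, y) ∈ toE M p R ↔ (x, y) ∈ p ∨ (x ∈ M ∧ x = y) ∨ (x, y) ∈ R := by
  simp only [toE, Finset.mem_union, Finset.mem_image, Prod.mk.injEq]
  constructor
  · rintro ((h | ⟨a, ha, rfl, rfl⟩) | h)
    · exact Or.inl h
    · exact Or.inr (Or.inl ⟨ha, rfl⟩)
    · exact Or.inr (Or.inr h)
  · rintro (h | ⟨hx, rfl⟩ | h)
    · exact Or.inl (Or.inl h)
    · exact Or.inl (Or.inr ⟨x, hx, rfl, rfl⟩)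
    · exact Or.inr h

lemma EI_card (M K : Finset α) (hMK : Disjoint M K)
    (p : Finset (α × α)) (hp : IsPOon K p) :
    (extPOs M K p).card = (Irel M K p).card := by
  obtain ⟨hpsub, hprefl, hptrans, hpanti⟩ := hp
  have hpK : ∀ {x y : α}, (x, y) ∈ p → x ∈ K ∧ y ∈ K := by
    intro x y h
    have := hpsub h; rw [Finset.mem_product] at this; exact this
  have hdisj : ∀ {a : α}, a ∈ M → a ∉ K := fun ha => Finset.disjoint_left.1 hMK ha
  apply Finset.card_bij' (i := fun Q _ => Q.filter fun r => r.1 ∈ M ∧ r.2 ∈ K)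
    (j := fun R _ => toE M p R)
  -- hi : maps into Irel
  · intro Q hQ
    rw [extPOs, Finset.mem_filter, Finset.mem_powerset] at hQ
    obtain ⟨hQsub, hQpo, hQres, hQmin⟩ := hQ
    obtain ⟨_, hrefl, htrans, hanti⟩ := hQpo
    rw [mem_Irel]
    refine ⟨?_, ?_, ?_⟩
    · intro r hr
      rw [Finset.mem_filter] at hr
      rw [Finset.mem_product]
      exact ⟨hr.2.1, hr.2.2⟩
    · intro a x y hax hxy
      rw [Finset.mem_filter] at hax ⊢
      have hxyQ : (x, y) ∈ Q := by
        have : (x, y) ∈ restrictRel Q K := hQres ▸ hxy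
        exact (Finset.mem_filter.1 this).1
      exact ⟨htrans _ _ _ hax.1 hxyQ, hax.2.1, (hpK hxy).2⟩
    · intro x hx
      obtain ⟨a, ha, hax⟩ := exists_min_below (M ∪ K) Q ⟨hQsub, hrefl, htrans, hanti⟩ x
        (Finset.mem_union_right _ hx)
      rw [hQmin] at ha
      exact ⟨a, ha, Finset.mem_filter.2 ⟨hax, ha, hx⟩⟩
  -- hj : maps into extPOs
  · intro R hR
    rw [mem_Irel] at hR
    obtain ⟨hRsub, hRup, hRcov⟩ := hR
    have hRmem : ∀ {a x : α}, (a, x) ∈ R → a ∈ M ∧ x ∈ K := by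
      intro a x h
      have := hRsub h; rwa [Finset.mem_product] at this
    rw [extPOs, Finset.mem_filter, Finset.mem_powerset]
    have hsub : toE M p R ⊆ (M ∪ K) ×ˢ (M ∪ K) := by
      intro r hr
      obtain ⟨x, y⟩ := r
      rw [Finset.mem_product]
      rcases mem_toE.1 hr with h | ⟨hx, rfl⟩ | h
      · exact ⟨Finset.mem_union_right _ (hpK h).1, Finset.mem_union_right _ (hpK h).2⟩
      · exact ⟨Finset.mem_union_left _ hx, Finset.mem_union_left _ hx⟩
      · exact ⟨Finset.mem_union_left _ (hRmem h).1, Finset.mem_union_right _ (hRmem h).2⟩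
    have htrans : ∀ x y z : α, (x, y) ∈ toE M p R → (y, z) ∈ toE M p R →
        (x, z) ∈ toE M p R := by
      intro x y z hxy hyz
      rcases mem_toE.1 hxy with h1 | ⟨hx, rfl⟩ | h1
      · -- (x,y) ∈ p, y ∈ K
        have hyK := (hpK h1).2
        rcases mem_toE.1 hyz with h2 | ⟨hy, rfl⟩ | h2
        · exact mem_toE.2 (Or.inl (hptrans _ _ _ h1 h2))
        · exact hxy
        · exact absurd (hRmem h2).1 (fun h => hdisj h hyK)
      · exact hyz
      · -- (x,y) ∈ R, x ∈ M, y ∈ K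
        have hyK := (hRmem h1).2
        rcases mem_toE.1 hyz with h2 | ⟨hy, rfl⟩ | h2
        · exact mem_toE.2 (Or.inr (Or.inr (hRup _ _ _ h1 h2)))
        · exact hxy
        · exact absurd (hRmem h2).1 (fun h => hdisj h hyK)
    refine ⟨hsub, ⟨hsub, ?_, htrans, ?_⟩, ?_, ?_⟩
    · -- refl
      intro x hx
      rcases Finset.mem_union.1 hx with h | h
      · exact mem_toE.2 (Or.inr (Or.inl ⟨h, rfl⟩))
      · exact mem_toE.2 (Or.inl (hprefl x h))
    · -- antisymm
      intro x y hxy hyx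
      rcases mem_toE.1 hxy with h1 | ⟨hx, rfl⟩ | h1
      · rcases mem_toE.1 hyx with h2 | ⟨hy, rfl⟩ | h2
        · exact hpanti _ _ h1 h2
        · rfl
        · exact absurd (hRmem h2).1 (fun h => hdisj h (hpK h1).2)
      · rfl
      · rcases mem_toE.1 hyx with h2 | ⟨hy, rfl⟩ | h2
        · exact absurd (hRmem h1).1 (fun h => hdisj h (hpK h2).2)
        · rfl
        · exact absurd (hRmem h1).1 (fun h => hdisj h (hRmem h2).2)
    · -- restrictRel = p
      ext ⟨x, y⟩
      rw [restrictRel, Finset.mem_filter]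
      constructor
      · rintro ⟨hxy, hx, hy⟩
        rcases mem_toE.1 hxy with h | ⟨hxM, rfl⟩ | h
        · exact h
        · exact absurd hx (hdisj hxM)
        · exact absurd hx (hdisj (hRmem h).1)
      · intro h
        exact ⟨mem_toE.2 (Or.inl h), (hpK h).1, (hpK h).2⟩
    · -- minset = M
      ext a
      rw [minset, Finset.mem_filter]
      constructor
      · rintro ⟨ha, hmin⟩
        rcases Finset.mem_union.1 ha with h | h
        · exact h
        · obtain ⟨b, hb, hba⟩ := hRcov a h
          exact absurd (hmin b (mem_toE.2 (Or.inr (Or.inr hba)))) (fun he => hdisj (he ▸ hb) h)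
      · intro ha
        refine ⟨Finset.mem_union_left _ ha, fun y hya => ?_⟩
        rcases mem_toE.1 hya with h | ⟨hy, rfl⟩ | h
        · exact absurd (hpK h).2 (hdisj ha)
        · rfl
        · exact absurd (hRmem h).2 (hdisj ha)
  -- left inverse : toE M p (Q.filter _) = Q
  · intro Q hQ
    rw [extPOs, Finset.mem_filter, Finset.mem_powerset] at hQ
    obtain ⟨hQsub, ⟨_, hrefl, htrans, hanti⟩, hQres, hQmin⟩ := hQ
    ext ⟨x, y⟩
    rw [mem_toE, Finset.mem_filter]
    constructor
    · rintro (h | ⟨hx, rfl⟩ | ⟨h, _⟩)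
      · exact (Finset.mem_filter.1 (hQres ▸ h : (x, y) ∈ restrictRel Q K)).1
      · exact hrefl x (Finset.mem_union_left _ hx)
      · exact h
    · intro h
      have hxy := hQsub h
      rw [Finset.mem_product] at hxy
      rcases Finset.mem_union.1 hxy.2 with hyM | hyK
      · -- y ∈ M, so y minimal, x = y
        have hymin : ∀ z, (z, y) ∈ Q → z = y := by
          have : y ∈ minset (M ∪ K) Q := by rw [hQmin]; exact hyM
          exact (Finset.mem_filter.1 this).2
        have := hymin x h
        subst this
        exact Or.inr (Or.inl ⟨hyM, rfl⟩)
      · rcases Finset.mem_union.1 hxy.1 with hxM | hxK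
        · exact Or.inr (Or.inr ⟨h, hxM, hyK⟩)
        · refine Or.inl ?_
          rw [← hQres, restrictRel, Finset.mem_filter]
          exact ⟨h, hxK, hyK⟩
  -- right inverse : (toE M p R).filter _ = R
  · intro R hR
    rw [mem_Irel] at hR
    have hRmem : ∀ {a x : α}, (a, x) ∈ R → a ∈ M ∧ x ∈ K := by
      intro a x h
      have := hR.1 h; rwa [Finset.mem_product] at this
    ext ⟨x, y⟩
    rw [Finset.mem_filter, mem_toE]
    constructor
    · rintro ⟨h | ⟨hxM, rfl⟩ | h, hx, hy⟩
      · exact absurd (hpK h).1 (hdisj hx)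
      · exact absurd hy (hdisj hxM)
      · exact h
    · intro h
      exact ⟨Or.inr (Or.inr h), (hRmem h).1, (hRmem h).2⟩

lemma FI_card (M K : Finset α) (hMK : Disjoint M K)
    (p : Finset (α × α)) (hp : IsPOon K p) :
    {f : α → Finset α | (∀ x, x ∉ K → f x = ∅) ∧
        (∀ x ∈ K, f x ⊆ M ∧ f x ≠ ∅) ∧
        (∀ x y : α, (x, y) ∈ p → f x ⊆ f y)}.ncard = (Irel M K p).card := by
  obtain ⟨hpsub, hprefl, hptrans, hpanti⟩ := hp
  have hpK : ∀ {x y : α}, (x, y) ∈ p → x ∈ K ∧ y ∈ K := by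
    intro x y h
    have := hpsub h; rw [Finset.mem_product] at this; exact this
  set Φ : Finset (α × α) → (α → Finset α) :=
    fun R => fun x => (R.filter fun r => r.2 = x).image Prod.fst with hΦdef
  have hmemΦ : ∀ (R : Finset (α × α)) (a x : α), a ∈ Φ R x ↔ (a, x) ∈ R := by
    intro R a x
    simp only [hΦdef, Finset.mem_image, Finset.mem_filter]
    constructor
    · rintro ⟨⟨b, c⟩, ⟨hbc, rfl⟩, rfl⟩; exact hbc
    · intro h; exact ⟨(a, x), ⟨h, rfl⟩, rfl⟩
  have himg : {f : α → Finset α | (∀ x, x ∉ K → f x = ∅) ∧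
        (∀ x ∈ K, f x ⊆ M ∧ f x ≠ ∅) ∧
        (∀ x y : α, (x, y) ∈ p → f x ⊆ f y)} = Φ '' ↑(Irel M K p) := by
    ext f
    simp only [Set.mem_image, Finset.mem_coe, Set.mem_setOf_eq]
    constructor
    · rintro ⟨h1, h2, h3⟩
      refine ⟨K.biUnion (fun x => (f x).image (fun a => (a, x))), ?_, ?_⟩
      · rw [mem_Irel]
        have hmem : ∀ a x : α, (a, x) ∈ K.biUnion (fun x => (f x).image (fun a => (a, x)))
            ↔ x ∈ K ∧ a ∈ f x := by
          intro a x
          simp only [Finset.mem_biUnion, Finset.mem_image, Prod.mk.injEq]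
          constructor
          · rintro ⟨y, hy, b, hb, rfl, rfl⟩; exact ⟨hy, hb⟩
          · rintro ⟨hx, ha⟩; exact ⟨x, hx, a, ha, rfl, rfl⟩
        refine ⟨?_, ?_, ?_⟩
        · intro ⟨a, x⟩ h
          rw [hmem] at h
          rw [Finset.mem_product]
          exact ⟨(h2 x h.1).1 h.2, h.1⟩
        · intro a x y hax hxy
          rw [hmem] at hax ⊢
          exact ⟨(hpK hxy).2, h3 _ _ hxy hax.2⟩
        · intro x hx
          obtain ⟨a, ha⟩ := Finset.nonempty_iff_ne_empty.2 (h2 x hx).2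
          exact ⟨a, (h2 x hx).1 ha, (hmem a x).2 ⟨hx, ha⟩⟩
      · funext x
        ext a
        rw [hmemΦ]
        simp only [Finset.mem_biUnion, Finset.mem_image, Prod.mk.injEq]
        constructor
        · rintro ⟨y, hy, b, hb, rfl, rfl⟩; exact hb
        · intro ha
          by_cases hx : x ∈ K
          · exact ⟨x, hx, a, ha, rfl, rfl⟩
          · rw [h1 x hx] at ha; exact absurd ha (Finset.notMem_empty a)
    · rintro ⟨R, hR, rfl⟩
      rw [mem_Irel] at hR
      obtain ⟨hRsub, hRup, hRcov⟩ := hR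
      have hRmem : ∀ {a x : α}, (a, x) ∈ R → a ∈ M ∧ x ∈ K := by
        intro a x h
        have := hRsub h; rwa [Finset.mem_product] at this
      refine ⟨?_, ?_, ?_⟩
      · intro x hx
        rw [Finset.eq_empty_iff_forall_notMem]
        intro a ha
        rw [hmemΦ] at ha
        exact hx (hRmem ha).2
      · intro x hx
        constructor
        · intro a ha
          rw [hmemΦ] at ha
          exact (hRmem ha).1
        · obtain ⟨a, _, hax⟩ := hRcov x hx
          exact Finset.nonempty_iff_ne_empty.1 ⟨a, (hmemΦ R a x).2 hax⟩
      · intro x y hxy a ha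
        rw [hmemΦ] at ha ⊢
        exact hRup _ _ _ ha hxy
  rw [himg, Set.ncard_image_of_injOn, Set.ncard_coe_finset]
  intro R hR R' hR' hEq
  ext ⟨a, x⟩
  rw [← hmemΦ, ← hmemΦ, hEq]

lemma GI_card (M K : Finset α) (hMK : Disjoint M K)
    (p : Finset (α × α)) (hp : IsPOon K p) :
    {g : α → Finset α | (∀ a, a ∉ M → g a = ∅) ∧
        (∀ a ∈ M, g a ∈ upsets K p) ∧ M.biUnion g = K}.ncard = (Irel M K p).card := by
  obtain ⟨hpsub, hprefl, hptrans, hpanti⟩ := hp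
  have hpK : ∀ {x y : α}, (x, y) ∈ p → x ∈ K ∧ y ∈ K := by
    intro x y h
    have := hpsub h; rw [Finset.mem_product] at this; exact this
  set Φ : Finset (α × α) → (α → Finset α) :=
    fun R => fun a => (R.filter fun r => r.1 = a).image Prod.snd with hΦdef
  have hmemΦ : ∀ (R : Finset (α × α)) (a x : α), x ∈ Φ R a ↔ (a, x) ∈ R := by
    intro R a x
    simp only [hΦdef, Finset.mem_image, Finset.mem_filter]
    constructor
    · rintro ⟨⟨b, c⟩, ⟨hbc, rfl⟩, rfl⟩; exact hbc
    · intro h; exact ⟨(a, x), ⟨h, rfl⟩, rfl⟩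
  have himg : {g : α → Finset α | (∀ a, a ∉ M → g a = ∅) ∧
        (∀ a ∈ M, g a ∈ upsets K p) ∧ M.biUnion g = K} = Φ '' ↑(Irel M K p) := by
    ext g
    simp only [Set.mem_image, Finset.mem_coe, Set.mem_setOf_eq]
    constructor
    · rintro ⟨h1, h2, h3⟩
      have hgK : ∀ a ∈ M, g a ⊆ K := by
        intro a ha
        have := h2 a ha
        rw [upsets, Finset.mem_filter, Finset.mem_powerset] at this
        exact this.1
      have hgup : ∀ a ∈ M, ∀ x ∈ g a, ∀ y : α, (x, y) ∈ p → y ∈ g a := by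
        intro a ha
        have := h2 a ha
        rw [upsets, Finset.mem_filter] at this
        exact this.2
      refine ⟨M.biUnion (fun a => (g a).image (fun x => (a, x))), ?_, ?_⟩
      · have hmem : ∀ a x : α, (a, x) ∈ M.biUnion (fun a => (g a).image (fun x => (a, x)))
            ↔ a ∈ M ∧ x ∈ g a := by
          intro a x
          simp only [Finset.mem_biUnion, Finset.mem_image, Prod.mk.injEq]
          constructor
          · rintro ⟨b, hb, y, hy, rfl, rfl⟩; exact ⟨hb, hy⟩
          · rintro ⟨ha, hx⟩; exact ⟨a, ha, x, hx, rfl, rfl⟩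
        rw [mem_Irel]
        refine ⟨?_, ?_, ?_⟩
        · intro ⟨a, x⟩ h
          rw [hmem] at h
          rw [Finset.mem_product]
          exact ⟨h.1, hgK a h.1 h.2⟩
        · intro a x y hax hxy
          rw [hmem] at hax ⊢
          exact ⟨hax.1, hgup a hax.1 x hax.2 y hxy⟩
        · intro x hx
          have : x ∈ M.biUnion g := h3 ▸ hx
          obtain ⟨a, ha, hxa⟩ := Finset.mem_biUnion.1 this
          exact ⟨a, ha, (hmem a x).2 ⟨ha, hxa⟩⟩
      · funext a
        ext x
        rw [hmemΦ]
        simp only [Finset.mem_biUnion, Finset.mem_image, Prod.mk.injEq]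
        constructor
        · rintro ⟨b, hb, y, hy, rfl, rfl⟩; exact hy
        · intro hx
          by_cases ha : a ∈ M
          · exact ⟨a, ha, x, hx, rfl, rfl⟩
          · rw [h1 a ha] at hx; exact absurd hx (Finset.notMem_empty x)
    · rintro ⟨R, hR, rfl⟩
      rw [mem_Irel] at hR
      obtain ⟨hRsub, hRup, hRcov⟩ := hR
      have hRmem : ∀ {a x : α}, (a, x) ∈ R → a ∈ M ∧ x ∈ K := by
        intro a x h
        have := hRsub h; rwa [Finset.mem_product] at this
      refine ⟨?_, ?_, ?_⟩
      · intro a ha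
        rw [Finset.eq_empty_iff_forall_notMem]
        intro x hx
        rw [hmemΦ] at hx
        exact ha (hRmem hx).1
      · intro a ha
        rw [upsets, Finset.mem_filter, Finset.mem_powerset]
        constructor
        · intro x hx
          rw [hmemΦ] at hx
          exact (hRmem hx).2
        · intro x hx y hxy
          rw [hmemΦ] at hx ⊢
          exact hRup _ _ _ hx hxy
      · ext x
        rw [Finset.mem_biUnion]
        constructor
        · rintro ⟨a, ha, hx⟩
          rw [hmemΦ] at hx
          exact (hRmem hx).2
        · intro hx
          obtain ⟨a, ha, hax⟩ := hRcov x hx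
          exact ⟨a, ha, (hmemΦ R a x).2 hax⟩
  rw [himg, Set.ncard_image_of_injOn, Set.ncard_coe_finset]
  intro R hR R' hR' hEq
  ext ⟨a, x⟩
  rw [← hmemΦ, ← hmemΦ, hEq]

lemma HI_card (M K : Finset α) (hMK : Disjoint M K)
    (p : Finset (α × α)) (hp : IsPOon K p) :
    {h : Finset α → Finset α | (∀ D, D ∉ downsets K p → h D = ∅) ∧
        (∀ D ∈ downsets K p, h D ⊆ M) ∧
        (∀ 𝒮 : Finset (Finset α), (∀ D ∈ 𝒮, D ∈ downsets K p) →
          h (𝒮.sup id) = 𝒮.sup h) ∧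
        (∀ D ∈ downsets K p, h D = ∅ → D = ∅)}.ncard = (Irel M K p).card := by
  obtain ⟨hpsub, hprefl, hptrans, hpanti⟩ := hp
  have hpK : ∀ {x y : α}, (x, y) ∈ p → x ∈ K ∧ y ∈ K := by
    intro x y h
    have := hpsub h; rw [Finset.mem_product] at this; exact this
  have mem_downsets : ∀ {D : Finset α}, D ∈ downsets K p ↔
      D ⊆ K ∧ ∀ y ∈ D, ∀ x : α, (x, y) ∈ p → x ∈ D := by
    intro D
    simp [downsets, Finset.mem_filter, Finset.mem_powerset]
  -- principal downsets
  set Dx : α → Finset α := fun x => K.filter (fun y => (y, x) ∈ p) with hDxdef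
  have hDxmem : ∀ {y x : α}, y ∈ Dx x ↔ y ∈ K ∧ (y, x) ∈ p := by
    intro y x; simp [hDxdef]
  have hDxds : ∀ x ∈ K, Dx x ∈ downsets K p := by
    intro x hx
    rw [mem_downsets]
    refine ⟨Finset.filter_subset _ _, fun y hy z hzy => ?_⟩
    rw [hDxmem] at hy ⊢
    exact ⟨(hpK hzy).1, hptrans _ _ _ hzy hy.2⟩
  have hDxself : ∀ x ∈ K, x ∈ Dx x := by
    intro x hx; rw [hDxmem]; exact ⟨hx, hprefl x hx⟩
  set Φ : Finset (α × α) → (Finset α → Finset α) :=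
    fun R => fun D => if D ∈ downsets K p
      then (R.filter fun r => r.2 ∈ D).image Prod.fst else ∅ with hΦdef
  have hmemΦ : ∀ (R : Finset (α × α)) (D : Finset α), D ∈ downsets K p →
      ∀ a : α, (a ∈ Φ R D ↔ ∃ x ∈ D, (a, x) ∈ R) := by
    intro R D hD a
    simp only [hΦdef, if_pos hD, Finset.mem_image, Finset.mem_filter]
    constructor
    · rintro ⟨⟨b, c⟩, ⟨hbc, hc⟩, rfl⟩; exact ⟨c, hc, hbc⟩
    · rintro ⟨x, hx, h⟩; exact ⟨(a, x), ⟨h, hx⟩, rfl⟩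
  -- key: value on principal downsets recovers R
  have hkey : ∀ R ∈ Irel M K p, ∀ a x : α, x ∈ K → (a ∈ Φ R (Dx x) ↔ (a, x) ∈ R) := by
    intro R hR a x hx
    rw [mem_Irel] at hR
    rw [hmemΦ R (Dx x) (hDxds x hx)]
    constructor
    · rintro ⟨y, hy, hay⟩
      exact hR.2.1 _ _ _ hay ((hDxmem.1 hy).2)
    · intro h
      exact ⟨x, hDxself x hx, h⟩
  have himg : {h : Finset α → Finset α | (∀ D, D ∉ downsets K p → h D = ∅) ∧
        (∀ D ∈ downsets K p, h D ⊆ M) ∧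
        (∀ 𝒮 : Finset (Finset α), (∀ D ∈ 𝒮, D ∈ downsets K p) →
          h (𝒮.sup id) = 𝒮.sup h) ∧
        (∀ D ∈ downsets K p, h D = ∅ → D = ∅)} = Φ '' ↑(Irel M K p) := by
    ext h
    simp only [Set.mem_image, Finset.mem_coe, Set.mem_setOf_eq]
    constructor
    · rintro ⟨h1, h2, h3, h4⟩
      -- monotonicity of h on downsets
      have hmono : ∀ D D', D ∈ downsets K p → D' ∈ downsets K p → D ⊆ D' →
          h D ⊆ h D' := by
        intro D D' hD hD' hsub
        have h𝒮 : ∀ E ∈ ({D, D'} : Finset (Finset α)), E ∈ downsets K p := by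
          intro E hE
          rcases Finset.mem_insert.1 hE with rfl | hE
          · exact hD
          · rw [Finset.mem_singleton.1 hE]; exact hD'
        have := h3 {D, D'} h𝒮
        simp only [Finset.sup_insert, Finset.sup_singleton, id] at this
        rw [show D ⊔ D' = D' from sup_eq_right.2 hsub] at this
        rw [this, Finset.sup_eq_union]
        exact Finset.subset_union_left
      set R : Finset (α × α) := K.biUnion (fun x => (h (Dx x)).image (fun a => (a, x)))
        with hRdef
      have hmemR : ∀ a x : α, (a, x) ∈ R ↔ x ∈ K ∧ a ∈ h (Dx x) := by
        intro a x
        simp only [hRdef, Finset.mem_biUnion, Finset.mem_image, Prod.mk.injEq]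
        constructor
        · rintro ⟨y, hy, b, hb, rfl, rfl⟩; exact ⟨hy, hb⟩
        · rintro ⟨hx, ha⟩; exact ⟨x, hx, a, ha, rfl, rfl⟩
      have hRI : R ∈ Irel M K p := by
        rw [mem_Irel]
        refine ⟨?_, ?_, ?_⟩
        · intro ⟨a, x⟩ hr
          rw [hmemR] at hr
          rw [Finset.mem_product]
          exact ⟨h2 _ (hDxds x hr.1) hr.2, hr.1⟩
        · intro a x y hax hxy
          rw [hmemR] at hax ⊢
          have hyK := (hpK hxy).2
          refine ⟨hyK, hmono (Dx x) (Dx y) (hDxds x hax.1) (hDxds y hyK) ?_ hax.2⟩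
          intro z hz
          rw [hDxmem] at hz ⊢
          exact ⟨hz.1, hptrans _ _ _ hz.2 hxy⟩
        · intro x hx
          have hne : h (Dx x) ≠ ∅ := by
            intro he
            have := h4 (Dx x) (hDxds x hx) he
            exact absurd (this ▸ hDxself x hx) (Finset.notMem_empty x)
          obtain ⟨a, ha⟩ := Finset.nonempty_iff_ne_empty.2 hne
          exact ⟨a, h2 _ (hDxds x hx) ha, (hmemR a x).2 ⟨hx, ha⟩⟩
      refine ⟨R, hRI, ?_⟩
      funext D
      by_cases hD : D ∈ downsets K p
      · -- use 𝒮 = D.image Dx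
        have hDK : D ⊆ K := (mem_downsets.1 hD).1
        have h𝒮 : ∀ E ∈ D.image Dx, E ∈ downsets K p := by
          intro E hE
          obtain ⟨x, hx, rfl⟩ := Finset.mem_image.1 hE
          exact hDxds x (hDK hx)
        have hsup : (D.image Dx).sup id = D := by
          ext y
          simp only [Finset.mem_sup, Finset.mem_image, id]
          constructor
          · rintro ⟨E, ⟨x, hx, rfl⟩, hy⟩
            exact (mem_downsets.1 hD).2 x hx y (hDxmem.1 hy).2
          · intro hy
            exact ⟨Dx y, ⟨y, hy, rfl⟩, hDxself y (hDK hy)⟩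
        have hDval := h3 (D.image Dx) h𝒮
        rw [hsup] at hDval
        ext a
        rw [hmemΦ R D hD, hDval, Finset.mem_sup]
        constructor
        · rintro ⟨x, hx, hax⟩
          rw [hmemR] at hax
          exact ⟨Dx x, Finset.mem_image_of_mem _ hx, hax.2⟩
        · rintro ⟨E, hE, ha⟩
          obtain ⟨x, hx, rfl⟩ := Finset.mem_image.1 hE
          exact ⟨x, hx, (hmemR a x).2 ⟨hDK hx, ha⟩⟩
      · rw [hΦdef]
        simp only [if_neg hD]
        exact (h1 D hD).symm
    · rintro ⟨R, hR, rfl⟩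
      have hRI := hR
      rw [mem_Irel] at hR
      obtain ⟨hRsub, hRup, hRcov⟩ := hR
      have hRmem : ∀ {a x : α}, (a, x) ∈ R → a ∈ M ∧ x ∈ K := by
        intro a x hax
        have := hRsub hax; rwa [Finset.mem_product] at this
      refine ⟨?_, ?_, ?_, ?_⟩
      · intro D hD
        rw [hΦdef]; simp [if_neg hD]
      · intro D hD a ha
        rw [hmemΦ R D hD] at ha
        obtain ⟨x, _, hax⟩ := ha
        exact (hRmem hax).1
      · intro 𝒮 h𝒮
        have hsupds : 𝒮.sup id ∈ downsets K p := by
          rw [mem_downsets]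
          constructor
          · intro y hy
            obtain ⟨E, hE, hyE⟩ := Finset.mem_sup.1 hy
            exact (mem_downsets.1 (h𝒮 E hE)).1 hyE
          · intro y hy x hxy
            obtain ⟨E, hE, hyE⟩ := Finset.mem_sup.1 hy
            exact Finset.mem_sup.2 ⟨E, hE, (mem_downsets.1 (h𝒮 E hE)).2 y hyE x hxy⟩
        ext a
        rw [hmemΦ R _ hsupds, Finset.mem_sup]
        constructor
        · rintro ⟨x, hx, hax⟩
          obtain ⟨E, hE, hxE⟩ := Finset.mem_sup.1 hx
          exact ⟨E, hE, (hmemΦ R E (h𝒮 E hE) a).2 ⟨x, hxE, hax⟩⟩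
        · rintro ⟨E, hE, ha⟩
          obtain ⟨x, hx, hax⟩ := (hmemΦ R E (h𝒮 E hE) a).1 ha
          exact ⟨x, Finset.mem_sup.2 ⟨E, hE, hx⟩, hax⟩
      · intro D hD hDe
        rw [Finset.eq_empty_iff_forall_notMem]
        intro x hx
        have hxK := (mem_downsets.1 hD).1 hx
        obtain ⟨a, _, hax⟩ := hRcov x hxK
        have : a ∈ Φ R D := (hmemΦ R D hD a).2 ⟨x, hx, hax⟩
        rw [hDe] at this
        exact absurd this (Finset.notMem_empty a)
  rw [himg, Set.ncard_image_of_injOn, Set.ncard_coe_finset]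
  intro R hR R' hR' hEq
  rw [Finset.mem_coe] at hR hR'
  ext ⟨a, x⟩
  have hx : ∀ {S : Finset (α × α)}, S ∈ Irel M K p → (a, x) ∈ S → x ∈ K := by
    intro S hS haS
    have := (mem_Irel.1 hS).1 haS; rw [Finset.mem_product] at this; exact this.2
  constructor
  · intro h
    exact (hkey R' hR' a x (hx hR h)).1 (hEq ▸ (hkey R hR a x (hx hR h)).2 h)
  · intro h
    exact (hkey R hR a x (hx hR' h)).1 (hEq.symm ▸ (hkey R' hR' a x (hx hR' h)).2 h)

/-- Theorem 4.1: the five sets `E(M,P)`, `F(M,P)`, `G(M,P)`, `H(M,P)`, `I(M,P)`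
have the same cardinality `e(m,P)`. Functions are normalised to be `∅` outside
their intended domain, so that the sets of functions are finite. -/
theorem stmt_7 (M K : Finset α) (hMK : Disjoint M K)
    (p : Finset (α × α)) (hp : IsPOon K p) :
    ((extPOs M K p).card =
      {f : α → Finset α | (∀ x, x ∉ K → f x = ∅) ∧
        (∀ x ∈ K, f x ⊆ M ∧ f x ≠ ∅) ∧
        (∀ x y : α, (x, y) ∈ p → f x ⊆ f y)}.ncard) ∧
    ((extPOs M K p).card =
      {g : α → Finset α | (∀ a, a ∉ M → g a = ∅) ∧
        (∀ a ∈ M, g a ∈ upsets K p) ∧ M.biUnion g = K}.ncard) ∧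
    ((extPOs M K p).card =
      {h : Finset α → Finset α | (∀ D, D ∉ downsets K p → h D = ∅) ∧
        (∀ D ∈ downsets K p, h D ⊆ M) ∧
        (∀ 𝒮 : Finset (Finset α), (∀ D ∈ 𝒮, D ∈ downsets K p) →
          h (𝒮.sup id) = 𝒮.sup h) ∧
        (∀ D ∈ downsets K p, h D = ∅ → D = ∅)}.ncard) ∧
    ((extPOs M K p).card =
      ((M ×ˢ K).powerset.filter fun R =>
        (∀ a x y : α, (a, x) ∈ R → (x, y) ∈ p → (a, y) ∈ R) ∧
        ∀ x ∈ K, ∃ a ∈ M, (a, x) ∈ R).card) := by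
  have hEI : (extPOs M K p).card = (Irel M K p).card := EI_card M K hMK p hp
  refine ⟨?_, ?_, ?_, ?_⟩
  · exact hEI.trans (FI_card M K hMK p hp).symm
  · exact hEI.trans (GI_card M K hMK p hp).symm
  · exact hEI.trans (HI_card M K hMK p hp).symm
  · rw [hEI]
    refine Finset.card_bij' (fun R _ => R) (fun R _ => R) ?_ ?_ (fun _ _ => rfl)
      (fun _ _ => rfl)
    · intro R hR
      simp only [Finset.mem_filter, Finset.mem_powerset]
      rw [mem_Irel] at hR
      exact ⟨hR.1, hR.2⟩
    · intro R hR
      simp only [Finset.mem_filter, Finset.mem_powerset] at hR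
      rw [mem_Irel]
      exact ⟨hR.1, hR.2⟩
end

section
/- Let P be a finite poset with set of minimal elements A = Min P, and let m ≥ 0. Then e(m,P) = Σ_{B ⊆ A} (−1)^{#B} · d(P − B)^m, where the (integer) sum ranges over all subsets B of A. -/
open scoped Classical

variable {α : Type*} [DecidableEq α]

section AuxStmt9

variable (M K : Finset α)

lemma card_upsets_eq_dnum (S : Finset α) (q : Finset (α × α)) (hq : q ⊆ S ×ˢ S) :
    (upsets S q).card = dnum S q := by
  unfold dnum downsets upsets
  apply Finset.card_bij (fun U _ => S \ U)
  · intro U hU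
    simp only [Finset.mem_filter, Finset.mem_powerset] at hU ⊢
    refine ⟨Finset.sdiff_subset, ?_⟩
    intro y hy x hxy
    have hx : x ∈ S ∧ y ∈ S := by simpa [Finset.mem_product] using hq hxy
    simp only [Finset.mem_sdiff] at hy ⊢
    exact ⟨hx.1, fun hxU => hy.2 (hU.2 x hxU y hxy)⟩
  · intro U hU V hV h
    simp only [Finset.mem_filter, Finset.mem_powerset] at hU hV
    have h2 : S ∩ U = S ∩ V := by
      rw [← Finset.sdiff_sdiff_self_left S U, h, Finset.sdiff_sdiff_self_left]
    rwa [Finset.inter_eq_right.2 hU.1, Finset.inter_eq_right.2 hV.1] at h2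
  · intro D hD
    simp only [Finset.mem_filter, Finset.mem_powerset] at hD
    refine ⟨S \ D, Finset.mem_filter.2 ⟨Finset.mem_powerset.2 Finset.sdiff_subset, ?_⟩, ?_⟩
    · intro x hx y hxy
      have hy : x ∈ S ∧ y ∈ S := by simpa [Finset.mem_product] using hq hxy
      simp only [Finset.mem_sdiff] at hx ⊢
      exact ⟨hy.2, fun hyD => hx.2 (hD.2 y hyD x hxy)⟩
    · rw [Finset.sdiff_sdiff_self_left, Finset.inter_eq_right.2 hD.1]

lemma restrictRel_subset_prod (q : Finset (α × α)) (A : Finset α) :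
    restrictRel q A ⊆ A ×ˢ A := by
  intro r hr
  simp only [restrictRel, Finset.mem_filter] at hr
  simpa [Finset.mem_product] using hr.2

lemma upsets_avoid (K : Finset α) (p : Finset (α × α)) (hp : IsPOon K p)
    (B : Finset α) (hB : B ⊆ minset K p) :
    (upsets K p).filter (fun U => ∀ x ∈ B, x ∉ U) =
      upsets (K \ B) (restrictRel p (K \ B)) := by
  ext U
  simp only [upsets, restrictRel, Finset.mem_filter, Finset.mem_powerset]
  constructor
  · rintro ⟨⟨hUK, hup⟩, havoid⟩
    refine ⟨fun x hx => Finset.mem_sdiff.2 ⟨hUK hx, fun hxB => havoid x hxB hx⟩, ?_⟩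
    intro x hxU y hy
    exact hup x hxU y hy.1
  · rintro ⟨hUKB, hup⟩
    have hUK : ∀ x ∈ U, x ∈ K ∧ x ∉ B := fun x hx => Finset.mem_sdiff.1 (hUKB hx)
    refine ⟨⟨fun x hx => (hUK x hx).1, ?_⟩, fun x hxB hxU => (hUK x hxU).2 hxB⟩
    intro x hxU y hxy
    have hyK : y ∈ K := by
      have := hp.1 hxy
      simp only [Finset.mem_product] at this
      exact this.2
    have hyB : y ∉ B := by
      intro hyB
      have hymin := hB hyB
      simp only [minset, Finset.mem_filter] at hymin
      have hxy' : x = y := hymin.2 x hxy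
      subst hxy'
      exact (hUK x hxU).2 hyB
    exact hup x hxU y ⟨hxy, Finset.mem_sdiff.2 ⟨(hUK x hxU).1, (hUK x hxU).2⟩,
      Finset.mem_sdiff.2 ⟨hyK, hyB⟩⟩

lemma pi_filter_avoid (M : Finset α) (t : Finset (Finset α)) (B : Finset α) :
    (M.pi fun _ => t).filter (fun f => ∀ a (ha : a ∈ M), ∀ x ∈ B, x ∉ f a ha) =
      M.pi (fun _ => t.filter (fun U => ∀ x ∈ B, x ∉ U)) := by
  ext f
  simp only [Finset.mem_filter, Finset.mem_pi]
  constructor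
  · rintro ⟨h1, h2⟩ a ha
    exact ⟨h1 a ha, h2 a ha⟩
  · intro h
    exact ⟨fun a ha => (h a ha).1, fun a ha => (h a ha).2⟩

lemma extPO_mem_iff (hMK : Disjoint M K) (p : Finset (α × α))
    (hp : IsPOon K p) (q : Finset (α × α)) (hq : q ∈ extPOs M K p) (x y : α) :
    (x, y) ∈ q ↔
      ((x, y) ∈ p ∨ (x ∈ M ∧ y = x) ∨ (x ∈ M ∧ y ∈ K.filter fun k => (x, k) ∈ q)) := by
  simp only [extPOs, Finset.mem_filter, Finset.mem_powerset] at hq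
  obtain ⟨hqsub, ⟨_, hrefl, _, _⟩, hrestr, hmin⟩ := hq
  have hpq : p ⊆ q := by rw [← hrestr]; exact Finset.filter_subset _ _
  have hminM : ∀ b ∈ M, ∀ z, (z, b) ∈ q → z = b := by
    intro b hb z hzb
    have : b ∈ minset (M ∪ K) q := by rw [hmin]; exact hb
    simp only [minset, Finset.mem_filter] at this
    exact this.2 z hzb
  constructor
  · intro hxy
    have hmem : x ∈ M ∪ K ∧ y ∈ M ∪ K := Finset.mem_product.1 (hqsub hxy)
    rcases Finset.mem_union.1 hmem.1 with hxM | hxK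
    · rcases Finset.mem_union.1 hmem.2 with hyM | hyK
      · exact Or.inr (Or.inl ⟨hxM, (hminM y hyM x hxy).symm⟩)
      · exact Or.inr (Or.inr ⟨hxM, Finset.mem_filter.2 ⟨hyK, hxy⟩⟩)
    · rcases Finset.mem_union.1 hmem.2 with hyM | hyK
      · have hxyeq := hminM y hyM x hxy
        subst hxyeq
        exact absurd hyM (Finset.disjoint_right.1 hMK hxK)
      · refine Or.inl ?_
        rw [← hrestr]
        exact Finset.mem_filter.2 ⟨hxy, hxK, hyK⟩
  · rintro (h | ⟨hxM, rfl⟩ | ⟨hxM, hy⟩)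
    · exact hpq h
    · exact hrefl _ (Finset.mem_union_left _ hxM)
    · exact (Finset.mem_filter.1 hy).2

end AuxStmt9

/-- Theorem 4.2: `e(m,P) = Σ_{B ⊆ Min P} (−1)^{#B} · d(P − B)^m`. -/
theorem stmt_9 (M K : Finset α) (hMK : Disjoint M K)
    (p : Finset (α × α)) (hp : IsPOon K p) :
    ((extPOs M K p).card : ℤ) =
      ∑ B ∈ (minset K p).powerset,
        (-1) ^ B.card *
          (dnum (K \ B) (restrictRel p (K \ B)) : ℤ) ^ M.card := by
  classical
  have hpK : ∀ {x y : α}, (x, y) ∈ p → x ∈ K ∧ y ∈ K := by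
    intro x y h
    simpa [Finset.mem_product] using hp.1 h
  set A := minset K p with hA
  -- Step 1: bijection with covering tuples of upsets
  have hstep1 : (extPOs M K p).card =
      ((M.pi fun _ => upsets K p).filter
        (fun f => ∀ x ∈ A, ∃ a, ∃ ha : a ∈ M, x ∈ f a ha)).card := by
    apply Finset.card_bij (fun q _ => fun a _ => K.filter fun k => (a, k) ∈ q)
    · -- maps into target
      intro q hq
      have hq' := hq
      simp only [extPOs, Finset.mem_filter, Finset.mem_powerset] at hq'
      obtain ⟨hqsub, ⟨hqprod, hqrefl, hqtrans, hqanti⟩, hrestr, hmin⟩ := hq'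
      have hpq : p ⊆ q := by rw [← hrestr]; exact Finset.filter_subset _ _
      refine Finset.mem_filter.2 ⟨Finset.mem_pi.2 fun a ha => ?_, ?_⟩
      · simp only [upsets, Finset.mem_filter, Finset.mem_powerset]
        refine ⟨Finset.filter_subset _ _, ?_⟩
        intro k hk y hky
        exact ⟨(hpK hky).2, hqtrans a k y hk.2 (hpq hky)⟩
      · intro x hxA
        simp only [hA, minset, Finset.mem_filter] at hxA
        obtain ⟨hxK, hxmin⟩ := hxA
        have hxnM : x ∉ M := Finset.disjoint_right.1 hMK hxK
        have hxnmin : x ∉ minset (M ∪ K) q := by rw [hmin]; exact hxnM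
        simp only [minset, Finset.mem_filter, not_and, not_forall] at hxnmin
        obtain ⟨y, hyx, hyne⟩ := hxnmin (Finset.mem_union_right _ hxK)
        have hymem : y ∈ M ∪ K := by
          have := hqsub hyx
          simp only [Finset.mem_product] at this
          exact this.1
        rcases Finset.mem_union.1 hymem with hyM | hyK
        · exact ⟨y, hyM, Finset.mem_filter.2 ⟨hxK, hyx⟩⟩
        · exact absurd (hxmin y (by rw [← hrestr]; exact Finset.mem_filter.2 ⟨hyx, hyK, hxK⟩))
            hyne
    · -- injective
      intro q hq q' hq' h
      have hfil : ∀ a, a ∈ M →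
          (K.filter fun k => (a, k) ∈ q) = K.filter fun k => (a, k) ∈ q' :=
        fun a ha => congrFun (congrFun h a) ha
      ext ⟨x, y⟩
      rw [extPO_mem_iff M K hMK p hp q hq x y, extPO_mem_iff M K hMK p hp q' hq' x y]
      constructor <;> rintro (h1 | h1 | ⟨hx, hy⟩)
      · exact Or.inl h1
      · exact Or.inr (Or.inl h1)
      · exact Or.inr (Or.inr ⟨hx, (hfil x hx) ▸ hy⟩)
      · exact Or.inl h1
      · exact Or.inr (Or.inl h1)
      · exact Or.inr (Or.inr ⟨hx, (hfil x hx).symm ▸ hy⟩)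
    · -- surjective
      intro f hf
      simp only [Finset.mem_filter, Finset.mem_pi] at hf
      obtain ⟨hf1, hf2⟩ := hf
      have hfK : ∀ a (ha : a ∈ M), f a ha ⊆ K := by
        intro a ha
        have := hf1 a ha
        simp only [upsets, Finset.mem_filter, Finset.mem_powerset] at this
        exact this.1
      have hfup : ∀ a (ha : a ∈ M), ∀ x ∈ f a ha, ∀ y, (x, y) ∈ p → y ∈ f a ha := by
        intro a ha
        have := hf1 a ha
        simp only [upsets, Finset.mem_filter, Finset.mem_powerset] at this
        exact fun x hx y hxy => this.2 x hx y hxy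
      set q : Finset (α × α) :=
        p ∪ M.image (fun a => (a, a)) ∪
          ((M ×ˢ K).filter fun r => ∃ h : r.1 ∈ M, r.2 ∈ f r.1 h) with hqdef
      have hq_mem : ∀ x y : α, (x, y) ∈ q ↔
          ((x, y) ∈ p ∨ (x ∈ M ∧ y = x) ∨ ∃ h : x ∈ M, y ∈ f x h) := by
        intro x y
        simp only [hqdef, Finset.mem_union, Finset.mem_image, Finset.mem_filter,
          Finset.mem_product, Prod.mk.injEq]
        constructor
        · rintro ((h | ⟨a, ha, rfl, rfl⟩) | ⟨⟨hxM, _⟩, hxm, hy⟩)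
          · exact Or.inl h
          · exact Or.inr (Or.inl ⟨ha, rfl⟩)
          · exact Or.inr (Or.inr ⟨hxm, hy⟩)
        · rintro (h | ⟨hxM, rfl⟩ | ⟨hxm, hy⟩)
          · exact Or.inl (Or.inl h)
          · exact Or.inl (Or.inr ⟨_, hxM, rfl, rfl⟩)
          · exact Or.inr ⟨⟨hxm, hfK x hxm hy⟩, hxm, hy⟩
      have hqmemMK : ∀ x y : α, (x, y) ∈ q → x ∈ M ∪ K ∧ y ∈ M ∪ K := by
        intro x y hxy
        rcases (hq_mem x y).1 hxy with h | ⟨hxM, rfl⟩ | ⟨hxm, hy⟩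
        · exact ⟨Finset.mem_union_right _ (hpK h).1, Finset.mem_union_right _ (hpK h).2⟩
        · exact ⟨Finset.mem_union_left _ hxM, Finset.mem_union_left _ hxM⟩
        · exact ⟨Finset.mem_union_left _ hxm, Finset.mem_union_right _ (hfK x hxm hy)⟩
      have hqsub : q ⊆ (M ∪ K) ×ˢ (M ∪ K) := by
        intro r hr
        obtain ⟨x, y⟩ := r
        have := hqmemMK x y hr
        simp only [Finset.mem_product]
        exact this
      have hqPO : q ∈ extPOs M K p := by
        simp only [extPOs, Finset.mem_filter, Finset.mem_powerset]
        refine ⟨hqsub, ⟨hqsub, ?_, ?_, ?_⟩, ?_, ?_⟩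
        · -- refl
          intro x hx
          rcases Finset.mem_union.1 hx with hxM | hxK
          · exact (hq_mem x x).2 (Or.inr (Or.inl ⟨hxM, rfl⟩))
          · exact (hq_mem x x).2 (Or.inl (hp.2.1 x hxK))
        · -- trans
          intro x y z hxy hyz
          rcases (hq_mem x y).1 hxy with h1 | ⟨hxM, rfl⟩ | ⟨hxm, hy⟩
          · rcases (hq_mem y z).1 hyz with h2 | ⟨hyM, rfl⟩ | ⟨hym, hz⟩
            · exact (hq_mem x z).2 (Or.inl (hp.2.2.1 x y z h1 h2))
            · exact hxy
            · exact absurd hym (Finset.disjoint_right.1 hMK (hpK h1).2)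
          · exact hyz
          · rcases (hq_mem y z).1 hyz with h2 | ⟨hyM, rfl⟩ | ⟨hym, hz⟩
            · exact (hq_mem x z).2 (Or.inr (Or.inr ⟨hxm, hfup x hxm y hy z h2⟩))
            · exact hxy
            · exact absurd hym (Finset.disjoint_right.1 hMK (hfK x hxm hy))
        · -- antisymmetry
          intro x y h1 h2
          rcases (hq_mem x y).1 h1 with ha | ⟨hxM, hEq⟩ | ⟨hxm, hy⟩
          · rcases (hq_mem y x).1 h2 with hb | ⟨hyM, hEq⟩ | ⟨hym, hx⟩
            · exact hp.2.2.2 x y ha hb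
            · exact hEq
            · exact absurd hym (Finset.disjoint_right.1 hMK (hpK ha).2)
          · exact hEq.symm
          · rcases (hq_mem y x).1 h2 with hb | ⟨hyM, hEq⟩ | ⟨hym, hx⟩
            · exact absurd hxm (Finset.disjoint_right.1 hMK (hpK hb).2)
            · exact hEq
            · exact absurd hym (Finset.disjoint_right.1 hMK (hfK x hxm hy))
        · -- restriction
          ext ⟨x, y⟩
          simp only [restrictRel, Finset.mem_filter]
          constructor
          · rintro ⟨hxy, hxK, hyK⟩
            rcases (hq_mem x y).1 hxy with h | ⟨hxM, hEq⟩ | ⟨hxm, hy⟩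
            · exact h
            · exact absurd hxM (Finset.disjoint_right.1 hMK hxK)
            · exact absurd hxm (Finset.disjoint_right.1 hMK hxK)
          · intro h
            exact ⟨(hq_mem x y).2 (Or.inl h), (hpK h).1, (hpK h).2⟩
        · -- minimal elements
          ext x
          simp only [minset, Finset.mem_filter]
          constructor
          · rintro ⟨hxMK, hmin⟩
            rcases Finset.mem_union.1 hxMK with hxM | hxK
            · exact hxM
            · by_cases hxA : x ∈ minset K p
              · simp only [minset, Finset.mem_filter] at hxA
                obtain ⟨a, ha, hxa⟩ := hf2 x (by
                  rw [hA]
                  simp only [minset, Finset.mem_filter]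
                  exact hxA)
                have hax : a = x := hmin a ((hq_mem a x).2 (Or.inr (Or.inr ⟨ha, hxa⟩)))
                subst hax
                exact absurd hxK (Finset.disjoint_left.1 hMK ha)
              · simp only [minset, Finset.mem_filter, not_and, not_forall] at hxA
                obtain ⟨y, hyx, hyne⟩ := hxA hxK
                exact absurd (hmin y ((hq_mem y x).2 (Or.inl hyx))) hyne
          · intro hxM
            refine ⟨Finset.mem_union_left _ hxM, fun y hyx => ?_⟩
            rcases (hq_mem y x).1 hyx with h | ⟨hyM, hEq⟩ | ⟨hym, hx⟩
            · exact absurd hxM (Finset.disjoint_right.1 hMK (hpK h).2)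
            · exact hEq.symm ▸ rfl
            · exact absurd hxM (Finset.disjoint_right.1 hMK (hfK y hym hx))
      refine ⟨q, hqPO, ?_⟩
      funext a
      funext ha
      ext k
      simp only [Finset.mem_filter]
      constructor
      · rintro ⟨hkK, hak⟩
        rcases (hq_mem a k).1 hak with h | ⟨haM, rfl⟩ | ⟨ham, hk⟩
        · exact absurd (hpK h).1 (Finset.disjoint_left.1 hMK ha)
        · exact absurd hkK (Finset.disjoint_left.1 hMK ha)
        · exact hk
      · intro hk
        exact ⟨hfK a ha hk, (hq_mem a k).2 (Or.inr (Or.inr ⟨ha, hk⟩))⟩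
  -- Step 2: inclusion–exclusion
  have key : ∀ f ∈ M.pi (fun _ => upsets K p),
      (if ∀ x ∈ A, ∃ a, ∃ ha : a ∈ M, x ∈ f a ha then (1 : ℤ) else 0) =
        ∑ B ∈ A.powerset, (-1 : ℤ) ^ B.card *
          (if ∀ a (ha : a ∈ M), ∀ x ∈ B, x ∉ f a ha then 1 else 0) := by
    intro f _
    set S := A.filter (fun x => ¬ ∃ a, ∃ ha : a ∈ M, x ∈ f a ha) with hS
    have hSA : S ⊆ A := Finset.filter_subset _ _
    have hiff : (∀ x ∈ A, ∃ a, ∃ ha : a ∈ M, x ∈ f a ha) ↔ S = ∅ := by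
      rw [hS, Finset.filter_eq_empty_iff]
      simp only [not_not]
    have hzero : ∀ B ∈ A.powerset, B ∉ S.powerset →
        (-1 : ℤ) ^ B.card *
          (if ∀ a (ha : a ∈ M), ∀ x ∈ B, x ∉ f a ha then 1 else 0) = 0 := by
      intro B hBA hBS
      rw [Finset.mem_powerset] at hBA hBS
      rw [if_neg, mul_zero]
      intro hcon
      apply hBS
      intro x hxB
      rw [hS, Finset.mem_filter]
      refine ⟨hBA hxB, ?_⟩
      rintro ⟨a, ha, hxf⟩
      exact hcon a ha x hxB hxf
    have hone : ∀ B ∈ S.powerset,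
        (-1 : ℤ) ^ B.card *
          (if ∀ a (ha : a ∈ M), ∀ x ∈ B, x ∉ f a ha then 1 else 0) =
          (-1 : ℤ) ^ B.card := by
      intro B hB
      rw [Finset.mem_powerset] at hB
      rw [if_pos, mul_one]
      intro a ha x hxB hxf
      have hxS := hB hxB
      rw [hS, Finset.mem_filter] at hxS
      exact hxS.2 ⟨a, ha, hxf⟩
    calc (if ∀ x ∈ A, ∃ a, ∃ ha : a ∈ M, x ∈ f a ha then (1 : ℤ) else 0)
        = ∑ B ∈ S.powerset, (-1 : ℤ) ^ B.card := by
          rw [Finset.sum_powerset_neg_one_pow_card]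
          by_cases hc : S = ∅
          · rw [if_pos hc, if_pos (hiff.2 hc)]
          · rw [if_neg hc, if_neg (fun h => hc (hiff.1 h))]
      _ = ∑ B ∈ S.powerset, (-1 : ℤ) ^ B.card *
            (if ∀ a (ha : a ∈ M), ∀ x ∈ B, x ∉ f a ha then 1 else 0) :=
          (Finset.sum_congr rfl hone).symm
      _ = ∑ B ∈ A.powerset, (-1 : ℤ) ^ B.card *
            (if ∀ a (ha : a ∈ M), ∀ x ∈ B, x ∉ f a ha then 1 else 0) :=
          Finset.sum_subset (Finset.powerset_mono.2 hSA) hzero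
  have hcast : (((M.pi fun _ => upsets K p).filter
      (fun f => ∀ x ∈ A, ∃ a, ∃ ha : a ∈ M, x ∈ f a ha)).card : ℤ) =
      ∑ f ∈ M.pi (fun _ => upsets K p),
        (if ∀ x ∈ A, ∃ a, ∃ ha : a ∈ M, x ∈ f a ha then (1 : ℤ) else 0) := by
    rw [Finset.card_filter]
    push_cast
    rfl
  rw [hstep1, hcast, Finset.sum_congr rfl key, Finset.sum_comm]
  apply Finset.sum_congr rfl
  intro B hB
  rw [Finset.mem_powerset] at hB
  rw [← Finset.mul_sum]
  congr 1
  have h1 : ∑ f ∈ M.pi (fun _ => upsets K p),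
      (if ∀ a (ha : a ∈ M), ∀ x ∈ B, x ∉ f a ha then (1 : ℤ) else 0) =
      (((M.pi fun _ => upsets K p).filter
        (fun f => ∀ a (ha : a ∈ M), ∀ x ∈ B, x ∉ f a ha)).card : ℤ) := by
    rw [Finset.card_filter]
    push_cast
    rfl
  rw [h1, pi_filter_avoid, Finset.card_pi, upsets_avoid K p hp B hB, Finset.prod_const,
    card_upsets_eq_dnum _ _ (restrictRel_subset_prod p (K \ B))]
  push_cast
  ring
end

section
/- Let P be a finite poset, n a natural number, p a prime number, and m = n(p−1) + 1. Then p divides e(m,P) − 1. -/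
open scoped Classical

variable {α : Type*} [DecidableEq α]

-- auxiliary lemmas section (to be inserted into proof.lean)

lemma fermat_aux (pr : ℕ) [Fact pr.Prime] (n : ℕ) (a : ZMod pr) :
    a ^ (n * (pr - 1) + 1) = a := by
  rcases eq_or_ne a 0 with rfl | h
  · rw [zero_pow]; omega
  · rw [pow_succ, mul_comm n (pr - 1), pow_mul, ZMod.pow_card_sub_one_eq_one h, one_pow, one_mul]

lemma filter_subset_sum {γ : Type*} (X : Finset γ) (g : γ → Finset α) (S : Finset α) :
    (X.filter fun x => g x ⊆ S).card
      = ∑ S' ∈ S.powerset, (X.filter fun x => g x = S').card := by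
  rw [Finset.card_eq_sum_card_fiberwise (f := g) (t := S.powerset)
    (fun x hx => by simpa using (Finset.mem_filter.mp hx).2)]
  refine Finset.sum_congr rfl fun S' hS' => ?_
  rw [Finset.filter_filter]
  congr 1
  apply Finset.filter_congr
  intro x _
  simp only [Finset.mem_powerset] at hS'
  constructor
  · exact fun h => h.2
  · exact fun h => ⟨h ▸ hS', h⟩

/-- The trace on `A` of a function `f` defined on `M`. -/
noncomputable def trace (M A : Finset α) (f : (a : α) → a ∈ M → Finset α) : Finset α :=
  A.filter fun k => ∃ a, ∃ h : a ∈ M, k ∈ f a h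

lemma trace_subset_iff (M A : Finset α) (f : (a : α) → a ∈ M → Finset α) (S : Finset α) :
    trace M A f ⊆ S ↔ ∀ (a : α) (h : a ∈ M), f a h ∩ A ⊆ S := by
  constructor
  · intro h a ha k hk
    simp only [Finset.mem_inter] at hk
    exact h (Finset.mem_filter.mpr ⟨hk.2, a, ha, hk.1⟩)
  · intro h k hk
    obtain ⟨hkA, a, ha, hkf⟩ := Finset.mem_filter.mp hk
    exact h a ha (Finset.mem_inter.mpr ⟨hkf, hkA⟩)

lemma count_lemma (pr : ℕ) [Fact pr.Prime] (n : ℕ) (M : Finset α)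
    (hM : M.card = n * (pr - 1) + 1) (U : Finset (Finset α)) (A : Finset α) :
    ∀ S, S ⊆ A →
      ((((M.pi fun _ => U).filter fun f => trace M A f = S).card : ZMod pr))
        = ((U.filter fun u => u ∩ A = S).card : ZMod pr) := by
  intro S
  induction S using Finset.strongInductionOn with
  | _ S ih =>
    intro hSA
    have hF : (((M.pi fun _ => U).filter fun f => trace M A f ⊆ S).card : ZMod pr)
        = ∑ S' ∈ S.powerset,
            ((((M.pi fun _ => U).filter fun f => trace M A f = S').card : ZMod pr)) := by
      rw [filter_subset_sum]; push_cast; ring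
    have hG : ((U.filter fun u => u ∩ A ⊆ S).card : ZMod pr)
        = ∑ S' ∈ S.powerset, (((U.filter fun u => u ∩ A = S').card : ZMod pr)) := by
      rw [filter_subset_sum]; push_cast; ring
    have hpi : ((M.pi fun _ => U).filter fun f => trace M A f ⊆ S)
        = M.pi fun _ => (U.filter fun u => u ∩ A ⊆ S) := by
      ext f
      simp only [Finset.mem_filter, Finset.mem_pi, trace_subset_iff]
      constructor
      · rintro ⟨h1, h2⟩ a ha
        exact ⟨h1 a ha, h2 a ha⟩
      · intro h
        exact ⟨fun a ha => (h a ha).1, fun a ha => (h a ha).2⟩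
    have hcardpi : (((M.pi fun _ => U).filter fun f => trace M A f ⊆ S).card : ZMod pr)
        = ((U.filter fun u => u ∩ A ⊆ S).card : ZMod pr) := by
      rw [hpi, Finset.card_pi, Finset.prod_const, hM]
      push_cast
      exact fermat_aux pr n _
    have hself : S ∈ S.powerset := Finset.mem_powerset.mpr (Finset.Subset.refl S)
    have hFs := Finset.add_sum_erase S.powerset
      (fun S' => ((((M.pi fun _ => U).filter fun f => trace M A f = S').card : ZMod pr))) hself
    have hGs := Finset.add_sum_erase S.powerset
      (fun S' => (((U.filter fun u => u ∩ A = S').card : ZMod pr))) hself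
    have htail : ∀ S' ∈ S.powerset.erase S,
        ((((M.pi fun _ => U).filter fun f => trace M A f = S').card : ZMod pr))
          = (((U.filter fun u => u ∩ A = S').card : ZMod pr)) := by
      intro S' hS'
      obtain ⟨hne, hsub⟩ := Finset.mem_erase.mp hS'
      exact ih S' (lt_of_le_of_ne (Finset.mem_powerset.mp hsub) hne)
        ((Finset.mem_powerset.mp hsub).trans hSA)
    have key : (((M.pi fun _ => U).filter fun f => trace M A f = S).card : ZMod pr)
          + ∑ S' ∈ S.powerset.erase S,
            (((U.filter fun u => u ∩ A = S').card : ZMod pr))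
        = ((U.filter fun u => u ∩ A = S).card : ZMod pr)
          + ∑ S' ∈ S.powerset.erase S,
            (((U.filter fun u => u ∩ A = S').card : ZMod pr)) := by
      rw [← Finset.sum_congr rfl htail] at hGs ⊢
      rw [hFs, hGs, ← hF, ← hG, hcardpi]
    exact add_right_cancel key

/-- every element of a finite poset lies above a minimal element -/
lemma exists_min_below_s10 (K : Finset α) (p : Finset (α × α)) (hp : IsPOon K p) :
    ∀ k ∈ K, ∃ k0 ∈ minset K p, (k0, k) ∈ p := by
  obtain ⟨hsub, hrefl, htrans, hanti⟩ := hp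
  suffices h : ∀ N : ℕ, ∀ k ∈ K, (K.filter fun y => (y, k) ∈ p).card ≤ N →
      ∃ k0 ∈ minset K p, (k0, k) ∈ p by
    intro k hk
    exact h _ k hk le_rfl
  intro N
  induction N with
  | zero =>
    intro k hk hcard
    exfalso
    have hmem : k ∈ K.filter fun y => (y, k) ∈ p :=
      Finset.mem_filter.mpr ⟨hk, hrefl k hk⟩
    have := Finset.card_pos.mpr ⟨k, hmem⟩
    omega
  | succ N ihN =>
    intro k hk hcard
    by_cases hmin : ∀ y : α, (y, k) ∈ p → y = k
    · exact ⟨k, Finset.mem_filter.mpr ⟨hk, hmin⟩, hrefl k hk⟩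
    · push_neg at hmin
      obtain ⟨y, hyk, hne⟩ := hmin
      have hyK : y ∈ K := (Finset.mem_product.mp (hsub hyk)).1
      have hsubD : (K.filter fun z => (z, y) ∈ p) ⊆ (K.filter fun z => (z, k) ∈ p).erase k := by
        intro z hz
        obtain ⟨hzK, hzy⟩ := Finset.mem_filter.mp hz
        refine Finset.mem_erase.mpr ⟨?_, Finset.mem_filter.mpr ⟨hzK, htrans z y k hzy hyk⟩⟩
        rintro rfl
        exact hne (hanti y z hyk hzy)
      have hcard' : (K.filter fun z => (z, y) ∈ p).card ≤ N := by
        have h1 := Finset.card_le_card hsubD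
        have h3 : k ∈ K.filter fun z => (z, k) ∈ p := Finset.mem_filter.mpr ⟨hk, hrefl k hk⟩
        have h4 := Finset.card_erase_of_mem h3
        omega
      obtain ⟨k0, hk0, hk0y⟩ := ihN y hyK hcard'
      exact ⟨k0, hk0, htrans k0 y k hk0y hyk⟩

lemma upsets_covering (K : Finset α) (p : Finset (α × α)) (hp : IsPOon K p) :
    (upsets K p).filter (fun u => u ∩ minset K p = minset K p) = {K} := by
  have hminsub : minset K p ⊆ K := Finset.filter_subset _ _
  ext u
  simp only [Finset.mem_filter, Finset.mem_singleton, Finset.inter_eq_right, upsets,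
    Finset.mem_powerset]
  constructor
  · rintro ⟨⟨huK, hup⟩, hMin⟩
    refine Finset.Subset.antisymm huK fun k hk => ?_
    obtain ⟨k0, hk0, hk0k⟩ := exists_min_below_s10 K p hp k hk
    exact hup k0 (hMin hk0) k hk0k
  · intro hu
    subst hu
    exact ⟨⟨Finset.Subset.refl _, fun x _ y hxy => (Finset.mem_product.mp (hp.1 hxy)).2⟩,
      hminsub⟩

/-- the backward map of the bijection -/
noncomputable def psiQ (M : Finset α) (p : Finset (α × α))
    (f : (a : α) → a ∈ M → Finset α) : Finset (α × α) :=
  p ∪ M.image (fun a => (a, a)) ∪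
    M.attach.biUnion (fun a => (f a.1 a.2).image fun k => ((a : α), k))

lemma mem_psiQ (M : Finset α) (p : Finset (α × α)) (f : (a : α) → a ∈ M → Finset α)
    (x y : α) :
    (x, y) ∈ psiQ M p f ↔ (x, y) ∈ p ∨ (x ∈ M ∧ y = x) ∨ (∃ h : x ∈ M, y ∈ f x h) := by
  simp only [psiQ, Finset.mem_union, Finset.mem_image, Finset.mem_biUnion, Finset.mem_attach,
    true_and, Prod.mk.injEq, Subtype.exists]
  constructor
  · rintro ((h | ⟨a, ha, h1, h2⟩) | ⟨a, ha, k, hk, h1, h2⟩)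
    · exact Or.inl h
    · subst h1; subst h2; exact Or.inr (Or.inl ⟨ha, rfl⟩)
    · subst h1; subst h2; exact Or.inr (Or.inr ⟨ha, hk⟩)
  · rintro (h | ⟨hx, h2⟩ | ⟨hx, hy⟩)
    · exact Or.inl (Or.inl h)
    · exact Or.inl (Or.inr ⟨x, hx, rfl, h2.symm⟩)
    · exact Or.inr ⟨x, hx, y, hy, rfl, rfl⟩

lemma card_ext (M K : Finset α) (hMK : Disjoint M K) (p : Finset (α × α))
    (hp : IsPOon K p) :
    (extPOs M K p).card =
      ((M.pi fun _ => upsets K p).filter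
        fun f => trace M (minset K p) f = minset K p).card := by
  obtain ⟨hpsub, hprefl, hptrans, hpanti⟩ := hp
  have hdisj : ∀ {x : α}, x ∈ M → x ∈ K → False := fun hx hk =>
    Finset.disjoint_left.mp hMK hx hk
  refine Finset.card_bij' (fun Q _ => fun a _ => K.filter fun k => (a, k) ∈ Q)
    (fun f _ => psiQ M p f) ?_ ?_ ?_ ?_
  · -- forward map lands in target
    intro Q hQ
    rw [extPOs, Finset.mem_filter, Finset.mem_powerset] at hQ
    obtain ⟨hQsub, ⟨_, hQrefl, hQtrans, hQanti⟩, hQres, hQmin⟩ := hQ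
    have hpQ : p ⊆ Q := by rw [← hQres]; exact Finset.filter_subset _ _
    rw [Finset.mem_filter, Finset.mem_pi]
    constructor
    · intro a ha
      rw [upsets, Finset.mem_filter, Finset.mem_powerset]
      refine ⟨Finset.filter_subset _ _, fun x hx y hxy => ?_⟩
      obtain ⟨hxK, haxQ⟩ := Finset.mem_filter.mp hx
      exact Finset.mem_filter.mpr ⟨(Finset.mem_product.mp (hpsub hxy)).2,
        hQtrans a x y haxQ (hpQ hxy)⟩
    · refine Finset.Subset.antisymm (Finset.filter_subset _ _) fun k hk => ?_
      obtain ⟨hkK, hkmin⟩ := Finset.mem_filter.mp hk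
      have hkM : k ∉ M := fun h => hdisj h hkK
      have hnotall : ¬ (∀ y : α, (y, k) ∈ Q → y = k) := by
        intro hall
        exact hkM ((Finset.ext_iff.mp hQmin k).mp (Finset.mem_filter.mpr
          ⟨Finset.mem_union_right _ hkK, hall⟩))
      push_neg at hnotall
      obtain ⟨y, hyk, hne⟩ := hnotall
      have hyMK : y ∈ M ∪ K := (Finset.mem_product.mp (hQsub hyk)).1
      have hyM : y ∈ M := by
        rcases Finset.mem_union.mp hyMK with h | h
        · exact h
        · exfalso
          have hres : (y, k) ∈ restrictRel Q K :=
            Finset.mem_filter.mpr ⟨hyk, h, hkK⟩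
          exact hne (hkmin y ((Finset.ext_iff.mp hQres (y, k)).mp hres))
      exact Finset.mem_filter.mpr ⟨hk, y, hyM, Finset.mem_filter.mpr ⟨hkK, hyk⟩⟩
  · -- backward map lands in source
    intro f hf
    rw [Finset.mem_filter, Finset.mem_pi] at hf
    obtain ⟨hfU, hftr⟩ := hf
    have hfsub : ∀ (a : α) (h : a ∈ M), f a h ⊆ K := by
      intro a h
      have hu := hfU a h
      rw [upsets, Finset.mem_filter, Finset.mem_powerset] at hu
      exact hu.1
    have hfup : ∀ (a : α) (h : a ∈ M), ∀ x ∈ f a h, ∀ y : α, (x, y) ∈ p → y ∈ f a h := by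
      intro a h
      have hu := hfU a h
      rw [upsets, Finset.mem_filter] at hu
      exact hu.2
    have hsub : psiQ M p f ⊆ (M ∪ K) ×ˢ (M ∪ K) := by
      rintro ⟨x, y⟩ hr
      rw [mem_psiQ] at hr
      rw [Finset.mem_product]
      rcases hr with h | ⟨h1, h2⟩ | ⟨h1, h2⟩
      · have hm := Finset.mem_product.mp (hpsub h)
        exact ⟨Finset.mem_union_right _ hm.1, Finset.mem_union_right _ hm.2⟩
      · subst h2
        exact ⟨Finset.mem_union_left _ h1, Finset.mem_union_left _ h1⟩
      · exact ⟨Finset.mem_union_left _ h1, Finset.mem_union_right _ (hfsub _ h1 h2)⟩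
    rw [extPOs, Finset.mem_filter, Finset.mem_powerset]
    refine ⟨hsub, ⟨hsub, ?_, ?_, ?_⟩, ?_, ?_⟩
    · -- reflexive
      intro x hx
      rw [mem_psiQ]
      rcases Finset.mem_union.mp hx with h | h
      · exact Or.inr (Or.inl ⟨h, rfl⟩)
      · exact Or.inl (hprefl x h)
    · -- transitive
      intro x y z hxy hyz
      rw [mem_psiQ] at hxy hyz ⊢
      rcases hxy with h | ⟨h1, h2⟩ | ⟨h1, h2⟩
      · have hyK : y ∈ K := (Finset.mem_product.mp (hpsub h)).2
        rcases hyz with h' | ⟨h1', h2'⟩ | ⟨h1', h2'⟩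
        · exact Or.inl (hptrans x y z h h')
        · exact absurd h1' (fun hm => hdisj hm hyK)
        · exact absurd h1' (fun hm => hdisj hm hyK)
      · subst h2
        rcases hyz with h' | ⟨h1', h2'⟩ | ⟨h1', h2'⟩
        · exact Or.inl h'
        · exact Or.inr (Or.inl ⟨h1', h2'⟩)
        · exact Or.inr (Or.inr ⟨h1', h2'⟩)
      · have hyK : y ∈ K := hfsub x h1 h2
        rcases hyz with h' | ⟨h1', h2'⟩ | ⟨h1', h2'⟩
        · exact Or.inr (Or.inr ⟨h1, hfup x h1 y h2 z h'⟩)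
        · exact absurd h1' (fun hm => hdisj hm hyK)
        · exact absurd h1' (fun hm => hdisj hm hyK)
    · -- antisymmetric
      intro x y hxy hyx
      rw [mem_psiQ] at hxy hyx
      rcases hxy with h | ⟨h1, h2⟩ | ⟨h1, h2⟩
      · rcases hyx with h' | ⟨h1', h2'⟩ | ⟨h1', h2'⟩
        · exact hpanti x y h h'
        · exact h2'
        · exact absurd h1' (fun hm => hdisj hm (Finset.mem_product.mp (hpsub h)).2)
      · exact h2.symm
      · rcases hyx with h' | ⟨h1', h2'⟩ | ⟨h1', h2'⟩
        · exact absurd h1 (fun hm => hdisj hm (Finset.mem_product.mp (hpsub h')).2)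
        · exact h2'
        · exact absurd h1' (fun hm => hdisj hm (hfsub x h1 h2))
    · -- restriction
      ext ⟨x, y⟩
      rw [restrictRel, Finset.mem_filter, mem_psiQ]
      constructor
      · rintro ⟨h | ⟨h1, h2⟩ | ⟨h1, h2⟩, hr1, hr2⟩
        · exact h
        · exact absurd h1 (fun hm => hdisj hm hr1)
        · exact absurd h1 (fun hm => hdisj hm hr1)
      · intro h
        have hm := Finset.mem_product.mp (hpsub h)
        exact ⟨Or.inl h, hm.1, hm.2⟩
    · -- minimal set
      ext x
      rw [minset, Finset.mem_filter]
      constructor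
      · rintro ⟨hxMK, hxmin⟩
        rcases Finset.mem_union.mp hxMK with h | hxK
        · exact h
        · exfalso
          have hxminp : x ∈ minset K p := by
            rw [minset, Finset.mem_filter]
            exact ⟨hxK, fun y hy => hxmin y ((mem_psiQ M p f y x).mpr (Or.inl hy))⟩
          have hxtr : x ∈ trace M (minset K p) f := (Finset.ext_iff.mp hftr x).mpr hxminp
          rw [trace, Finset.mem_filter] at hxtr
          obtain ⟨-, a, ha, hxf⟩ := hxtr
          have hax : a = x :=
            hxmin a ((mem_psiQ M p f a x).mpr (Or.inr (Or.inr ⟨ha, hxf⟩)))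
          exact hdisj (hax ▸ ha) hxK
      · intro hxM
        refine ⟨Finset.mem_union_left _ hxM, fun y hy => ?_⟩
        rw [mem_psiQ] at hy
        rcases hy with h | ⟨h1, h2⟩ | ⟨h1, h2⟩
        · exact absurd ((Finset.mem_product.mp (hpsub h)).2) (fun hk => hdisj hxM hk)
        · exact h2.symm
        · exact absurd (hfsub y h1 h2) (fun hk => hdisj hxM hk)
  · -- left inverse
    intro Q hQ
    rw [extPOs, Finset.mem_filter, Finset.mem_powerset] at hQ
    obtain ⟨hQsub, ⟨_, hQrefl, hQtrans, hQanti⟩, hQres, hQmin⟩ := hQ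
    have hpQ : p ⊆ Q := by rw [← hQres]; exact Finset.filter_subset _ _
    have hMmin : ∀ x ∈ M, ∀ y : α, (y, x) ∈ Q → y = x := by
      intro x hx
      have hm : x ∈ minset (M ∪ K) Q := (Finset.ext_iff.mp hQmin x).mpr hx
      exact (Finset.mem_filter.mp hm).2
    ext r
    obtain ⟨x, y⟩ := r
    rw [mem_psiQ]
    constructor
    · rintro (h | ⟨h1, h2⟩ | ⟨h1, h2⟩)
      · exact hpQ h
      · subst h2
        exact hQrefl _ (Finset.mem_union_left _ h1)
      · exact (Finset.mem_filter.mp h2).2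
    · intro h
      have hx := (Finset.mem_product.mp (hQsub h)).1
      have hy := (Finset.mem_product.mp (hQsub h)).2
      rcases Finset.mem_union.mp hy with hyM | hyK
      · have hxy : x = y := hMmin y hyM x h
        subst hxy
        exact Or.inr (Or.inl ⟨hyM, rfl⟩)
      · rcases Finset.mem_union.mp hx with hxM | hxK
        · exact Or.inr (Or.inr ⟨hxM, Finset.mem_filter.mpr ⟨hyK, h⟩⟩)
        · exact Or.inl ((Finset.ext_iff.mp hQres (x, y)).mp (Finset.mem_filter.mpr ⟨h, hxK, hyK⟩))
  · -- right inverse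
    intro f hf
    rw [Finset.mem_filter, Finset.mem_pi] at hf
    obtain ⟨hfU, -⟩ := hf
    have hfsub : ∀ (a : α) (h : a ∈ M), f a h ⊆ K := by
      intro a h
      have hu := hfU a h
      rw [upsets, Finset.mem_filter, Finset.mem_powerset] at hu
      exact hu.1
    funext a ha
    ext k
    simp only [Finset.mem_filter, mem_psiQ]
    constructor
    · rintro ⟨hkK, h | ⟨h1, rfl⟩ | ⟨h1, h2⟩⟩
      · exact absurd ((Finset.mem_product.mp (hpsub h)).1) (fun hm => hdisj ha hm)
      · exact (hdisj ha hkK).elim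
      · exact h2
    · intro hk
      exact ⟨hfsub a ha hk, Or.inr (Or.inr ⟨ha, hk⟩)⟩

/-- Corollary 4.3: for a prime `p` and `m = n(p−1) + 1`, `p` divides `e(m,P) − 1`. -/
theorem stmt_10 (M K : Finset α) (hMK : Disjoint M K)
    (p : Finset (α × α)) (hp : IsPOon K p)
    (n pr : ℕ) (hpr : pr.Prime) (hm : M.card = n * (pr - 1) + 1) :
    (pr : ℤ) ∣ ((extPOs M K p).card : ℤ) - 1 := by
  haveI : Fact pr.Prime := ⟨hpr⟩
  have hmain : (((extPOs M K p).card : ZMod pr)) = 1 := by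
    rw [card_ext M K hMK p hp,
      count_lemma pr n M hm (upsets K p) (minset K p) (minset K p) (Finset.Subset.refl _),
      upsets_covering K p hp]
    simp
  rw [← ZMod.intCast_zmod_eq_zero_iff_dvd]
  push_cast
  rw [hmain]
  ring
end
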